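/- arXiv:1703.04541 — 11 statements merged into one kernel-verified Lean document; each statement's English description precedes it below -/
import Mathlib

section
/- Let r ≥ 1 and let z_1,…,z_n and Z_1,…,Z_n be two collections of vectors in ℝ^r, each spanning ℝ^r, such that the cone Cone(Z) is pointed and for every r-tuple of indices 1 ≤ i_1,…,i_r ≤ n the determinants ⟨z_{i_1} ⋯ z_{i_r}⟩ and ⟨Z_{i_1} ⋯ Z_{i_r}⟩ have the same sign. Then the map φ : ℝ^r → ℝ^r defined by φ(u) = Σ_{i=1}^n e^{z_i·u} Z_i is a smooth bijection from ℝ^r onto the interior Int(Cone(Z)) = {Σ_{i=1}^n a_i Z_i : all a_i > 0}, and its derivative is invertible at every point of ℝ^r (so φ is a diffeomorphism of ℝ^r onto Int(Cone(Z))). -/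
open scoped BigOperators

open Finset Filter

section MonomialConeAux

variable {r n : ℕ}




/-- If the `z i` span, a vector orthogonal to all of them is zero. -/
lemma span_dot (z : Fin n → Fin r → ℝ)
    (hzspan : Submodule.span ℝ (Set.range z) = ⊤)
    (v : Fin r → ℝ) (h : ∀ i, ∑ a, z i a * v a = 0) : v = 0 := by
  have key : ∀ w : Fin r → ℝ, w ∈ Submodule.span ℝ (Set.range z) →
      ∑ a, w a * v a = 0 := by
    intro w hw
    induction hw using Submodule.span_induction with
    | mem x hx => obtain ⟨i, rfl⟩ := hx; exact h i
    | zero => simp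
    | add x y hx hy ihx ihy =>
        simp only [Pi.add_apply, add_mul, Finset.sum_add_distrib, ihx, ihy, add_zero]
    | smul a x hx ihx =>
        simp only [Pi.smul_apply, smul_eq_mul, mul_assoc, ← Finset.mul_sum, ihx, mul_zero]
  have hv : ∑ a, v a * v a = 0 := key v (by rw [hzspan]; trivial)
  funext a
  have : ∀ b ∈ Finset.univ, 0 ≤ v b * v b := fun b _ => mul_self_nonneg _
  have := (Finset.sum_eq_zero_iff_of_nonneg this).1 hv a (Finset.mem_univ a)
  simpa [mul_self_eq_zero] using this

/-- factorization of difference of exponentials -/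
lemma exp_factor (x y : ℝ) : ∃ m : ℝ, 0 < m ∧ Real.exp x - Real.exp y = m * (x - y) := by
  rcases lt_trichotomy x y with hlt | heq | hgt
  · refine ⟨(Real.exp x - Real.exp y) / (x - y), ?_, ?_⟩
    · apply div_pos_of_neg_of_neg
      · simpa using Real.exp_lt_exp.2 hlt
      · linarith
    · rw [div_mul_cancel₀]; intro h; apply absurd (sub_eq_zero.1 h); exact ne_of_lt hlt
  · exact ⟨1, one_pos, by simp [heq]⟩
  · refine ⟨(Real.exp x - Real.exp y) / (x - y), ?_, ?_⟩
    · apply div_pos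
      · simpa using Real.exp_lt_exp.2 hgt
      · linarith
    · rw [div_mul_cancel₀]; intro h; apply absurd (sub_eq_zero.1 h); exact ne_of_gt hgt

lemma sign_pair {x y : ℝ} (h : Real.sign x = Real.sign y) :
    (0 < x ↔ 0 < y) ∧ (x = 0 ↔ y = 0) := by
  rcases lt_trichotomy x 0 with hx | hx | hx <;>
    rcases lt_trichotomy y 0 with hy | hy | hy <;>
    simp only [hx, hy, Real.sign_of_neg, Real.sign_of_pos, Real.sign_zero] at h ⊢ <;>
    first
      | (constructor <;> constructor <;> intro h' <;> first | linarith | norm_num at h)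
      | norm_num at h
      | (constructor <;> constructor <;> intro h' <;> linarith)



/-- Conic Carathéodory: a nonnegative combination can be rewritten as a positive
combination over a linearly independent subfamily. -/
lemma conic_carath (Z : Fin n → Fin r → ℝ) (s : Finset (Fin n)) :
    ∀ a : Fin n → ℝ, (∀ i ∈ s, 0 ≤ a i) →
    ∃ (F : Finset (Fin n)) (b : Fin n → ℝ), F ⊆ s ∧ (∀ i ∈ F, 0 < b i) ∧
      (∑ i ∈ F, b i • Z i) = (∑ i ∈ s, a i • Z i) ∧
      LinearIndependent ℝ (fun i : F => Z i) := by
  classical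
  induction s using Finset.strongInductionOn with
  | _ s ih =>
  intro a ha
  by_cases h0 : ∃ i ∈ s, a i = 0
  · obtain ⟨i0, hi0s, hi0⟩ := h0
    obtain ⟨F, b, hFs, hb, hsum, hind⟩ := ih (s.erase i0) (Finset.erase_ssubset hi0s) a
      (fun i hi => ha i (Finset.mem_of_mem_erase hi))
    refine ⟨F, b, hFs.trans (Finset.erase_subset _ _), hb, ?_, hind⟩
    rw [hsum, Finset.sum_erase]
    rw [hi0, zero_smul]
  · push_neg at h0
    have hpos : ∀ i ∈ s, 0 < a i := fun i hi => (ha i hi).lt_of_ne' (h0 i hi)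
    by_cases hind : LinearIndependent ℝ (fun i : s => Z i)
    · exact ⟨s, a, le_refl _, hpos, rfl, hind⟩
    · -- get a dependence
      obtain ⟨g, hgsum, ⟨i1, hg1⟩⟩ := Fintype.not_linearIndependent_iff.1 hind
      set G0 : Fin n → ℝ := fun i => if h : i ∈ s then g ⟨i, h⟩ else 0 with hG
      have hG0sum : ∑ i ∈ s, G0 i • Z i = 0 := by
        rw [← Finset.sum_attach s (fun i => G0 i • Z i), ← hgsum]
        apply Finset.sum_congr rfl
        intro x _
        simp [hG, x.2]
      have hGex : ∃ i ∈ s, G0 i ≠ 0 := ⟨i1, i1.2, by simp [hG, i1.2, hg1]⟩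
      have main : ∀ G : Fin n → ℝ, (∑ i ∈ s, G i • Z i = 0) → (∃ i ∈ s, 0 < G i) →
          ∃ (F : Finset (Fin n)) (b : Fin n → ℝ), F ⊆ s ∧ (∀ i ∈ F, 0 < b i) ∧
            (∑ i ∈ F, b i • Z i) = (∑ i ∈ s, a i • Z i) ∧
            LinearIndependent ℝ (fun i : F => Z i) := by
        intro G hGsum hGpos
        set P := s.filter (fun i => 0 < G i) with hP
        have hPne : P.Nonempty := by
          obtain ⟨i, hi, hGi⟩ := hGpos
          exact ⟨i, Finset.mem_filter.2 ⟨hi, hGi⟩⟩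
        obtain ⟨i0, hi0P, hi0min⟩ := Finset.exists_min_image P (fun i => a i / G i) hPne
        have hi0s : i0 ∈ s := (Finset.mem_filter.1 hi0P).1
        have hGi0 : 0 < G i0 := (Finset.mem_filter.1 hi0P).2
        set t := a i0 / G i0 with ht
        have htpos : 0 < t := div_pos (hpos i0 hi0s) hGi0
        set a' : Fin n → ℝ := fun i => a i - t * G i with ha'
        have ha'nonneg : ∀ i ∈ s, 0 ≤ a' i := by
          intro i hi
          by_cases hGi : 0 < G i
          · have hmin := hi0min i (Finset.mem_filter.2 ⟨hi, hGi⟩)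
            have h2 : t * G i ≤ a i := by
              rw [ht, div_mul_eq_mul_div, div_le_iff₀ hGi0]
              rw [div_le_div_iff₀ hGi0 hGi] at hmin
              linarith
            simp only [ha']
            linarith
          · push_neg at hGi
            have h3 : 0 ≤ -(t * G i) := by nlinarith
            have h4 := hpos i hi
            simp only [ha']
            linarith
        have ha'i0 : a' i0 = 0 := by
          simp only [ha', ht]
          field_simp
          ring
        have hsum' : ∑ i ∈ s, a' i • Z i = ∑ i ∈ s, a i • Z i := by
          simp only [ha', sub_smul, Finset.sum_sub_distrib]
          have hcongr : ∀ i ∈ s, (t * G i) • Z i = t • (G i • Z i) :=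
            fun i _ => mul_smul t (G i) (Z i)
          rw [Finset.sum_congr rfl hcongr, ← Finset.smul_sum, hGsum, smul_zero, sub_zero]
        obtain ⟨F, b, hFs, hb, hsum, hind⟩ := ih (s.erase i0)
          (Finset.erase_ssubset hi0s) a' (fun i hi => ha'nonneg i (Finset.mem_of_mem_erase hi))
        refine ⟨F, b, hFs.trans (Finset.erase_subset _ _), hb, ?_, hind⟩
        rw [hsum, Finset.sum_erase _ (by rw [ha'i0, zero_smul]), hsum']
      rcases hGex with ⟨i2, hi2s, hGi2⟩
      rcases lt_or_gt_of_ne hGi2 with hneg | hposG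
      · refine main (fun i => -G0 i) ?_ ⟨i2, hi2s, neg_pos.2 hneg⟩
        simp only [neg_smul, Finset.sum_neg_distrib, hG0sum, neg_zero]
      · exact main G0 hG0sum ⟨i2, hi2s, hposG⟩

/-- Extend an independent subfamily to a full basis-indexing map into the family. -/
lemma extend_basis (Z : Fin n → Fin r → ℝ)
    (hZspan : Submodule.span ℝ (Set.range Z) = ⊤)
    (F : Finset (Fin n)) (hF : LinearIndependent ℝ (fun i : F => Z i)) :
    ∃ e : Fin r → Fin n, Function.Injective e ∧
      LinearIndependent ℝ (fun b => Z (e b)) ∧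
      (∀ i ∈ F, ∃ b, e b = i) := by
  classical
  have himg : LinearIndependent ℝ (fun x : ↥(Z '' (↑F : Set (Fin n))) => (x : Fin r → ℝ)) := by
    have h' : LinearIndependent ℝ (fun i : (↑F : Set (Fin n)) => Z i) := hF
    exact LinearIndepOn.id_image h'
  obtain ⟨bset, hbt, hsb, htb, hbind⟩ :=
    exists_linearIndepOn_id_extension himg (Set.image_subset_range Z F)
  have hbfin : bset.Finite := (Set.finite_range Z).subset hbt
  haveI : Fintype ↥bset := hbfin.fintype
  have hspan : Submodule.span ℝ bset = ⊤ := by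
    rw [eq_top_iff, ← hZspan]
    exact Submodule.span_le.mpr htb
  -- basis
  have hbasis : Nonempty (Module.Basis ↥bset ℝ (Fin r → ℝ)) := by
    refine ⟨Module.Basis.mk (v := ((↑) : bset → Fin r → ℝ)) hbind ?_⟩
    rw [Subtype.range_coe, hspan]
  obtain ⟨bas⟩ := hbasis
  have hcard : Fintype.card ↥bset = r := by
    have h1 := Module.finrank_eq_card_basis bas
    rw [Module.finrank_fintype_fun_eq_card] at h1
    simp only [Fintype.card_fin] at h1
    omega
  have equiv : Fin r ≃ ↥bset := (Fintype.equivFinOfCardEq hcard).symm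
  have hx : ∀ x : ↥bset, ∃ i : Fin n, Z i = ↑x ∧ ((x : Fin r → ℝ) ∈ Z '' (↑F : Set (Fin n)) → i ∈ F) := by
    intro x
    by_cases hxF : (x : Fin r → ℝ) ∈ Z '' (↑F : Set (Fin n))
    · obtain ⟨i, hiF, hi⟩ := hxF
      exact ⟨i, hi, fun _ => by exact_mod_cast hiF⟩
    · obtain ⟨i, hi⟩ := hbt x.2
      exact ⟨i, hi, fun h => absurd h hxF⟩
  choose ι hι1 hι2 using hx
  refine ⟨fun b => ι (equiv b), ?_, ?_, ?_⟩
  · intro b b' h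
    have h' : ι (equiv b) = ι (equiv b') := h
    have : Z (ι (equiv b)) = Z (ι (equiv b')) := by rw [h']
    rw [hι1, hι1] at this
    exact equiv.injective (Subtype.ext this)
  · have : (fun b => Z (ι (equiv b))) = (fun b => ((equiv b : ↥bset) : Fin r → ℝ)) := by
      funext b; rw [hι1]
    rw [this]
    exact hbind.comp equiv equiv.injective
  · intro i hiF
    have hZiF : Z i ∈ Z '' (↑F : Set (Fin n)) := Set.mem_image_of_mem Z (by exact_mod_cast hiF)
    set x : ↥bset := ⟨Z i, hsb hZiF⟩ with hxdef
    refine ⟨equiv.symm x, ?_⟩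
    show ι (equiv (equiv.symm x)) = i
    rw [Equiv.apply_symm_apply]
    have h1 : Z (ι x) = Z i := by rw [hι1]
    have h2 : ι x ∈ F := hι2 x (by rw [hxdef]; exact hZiF)
    -- injectivity of Z on F
    have hinj := hF.injective
    have := hinj (a₁ := ⟨ι x, h2⟩) (a₂ := ⟨i, hiF⟩) (by simpa using h1)
    exact congrArg Subtype.val this

lemma det_ne_zero_of_indep (Z : Fin n → Fin r → ℝ) (e : Fin r → Fin n)
    (h : LinearIndependent ℝ (fun b => Z (e b))) :
    Matrix.det (Matrix.of fun a b => Z (e b) a) ≠ 0 := by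
  classical
  intro hdet
  obtain ⟨v, hv0, hv⟩ := (Matrix.exists_mulVec_eq_zero_iff).2 hdet
  have hsum : ∑ b, v b • Z (e b) = 0 := by
    funext a
    have := congrFun hv a
    simpa [Matrix.mulVec, dotProduct, mul_comm] using this
  have := Fintype.linearIndependent_iff.1 h v (by
    convert hsum using 1)
  exact hv0 (funext fun b => this b)

/-- key orthogonality lemma, nonnegative version -/
lemma lemB0 (z Z : Fin n → Fin r → ℝ)
    (hZspan : Submodule.span ℝ (Set.range Z) = ⊤)
    (hsign : ∀ f : Fin r → Fin n,
      Real.sign (Matrix.det (Matrix.of fun a b => z (f b) a)) =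
      Real.sign (Matrix.det (Matrix.of fun a b => Z (f b) a)))
    (c : Fin n → ℝ) (hc : ∀ i, 0 ≤ c i)
    (hdep : ∑ i, c i • Z i = 0)
    (v : Fin r → ℝ) (hv : ∀ i, c i ≠ 0 → 0 ≤ ∑ a, z i a * v a)
    (j : Fin n) (hj : c j ≠ 0) (hjv : 0 < ∑ a, z j a * v a) : False := by
  classical
  set s := (Finset.univ.erase j).filter (fun i => c i ≠ 0) with hs
  have hcj : 0 < c j := (hc j).lt_of_ne' hj
  have h1 : c j • Z j + ∑ i ∈ Finset.univ.erase j, c i • Z i = 0 := by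
    rw [Finset.add_sum_erase Finset.univ (fun i => c i • Z i) (Finset.mem_univ j)]
    exact hdep
  have h2 : ∑ i ∈ s, c i • Z i = ∑ i ∈ Finset.univ.erase j, c i • Z i := by
    rw [hs]
    exact Finset.sum_filter_of_ne (fun i _ hne h0 => hne (by rw [h0, zero_smul]))
  have step1 : ∑ i ∈ s, (c i / c j) • Z i = -Z j := by
    have h3 : ∑ i ∈ s, (c i / c j) • Z i = (c j)⁻¹ • ∑ i ∈ s, c i • Z i := by
      rw [Finset.smul_sum]
      exact Finset.sum_congr rfl fun i _ => by
        rw [smul_smul, div_eq_inv_mul]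
    have h4 : ∑ i ∈ Finset.univ.erase j, c i • Z i = -(c j • Z j) :=
      eq_neg_of_add_eq_zero_right h1
    rw [h3, h2, h4, smul_neg, smul_smul, inv_mul_cancel₀ hj, one_smul]
  obtain ⟨F, b, hFs, hbpos, hFsum, hFind⟩ :=
    conic_carath Z s (fun i => c i / c j) (fun i _ => div_nonneg (hc i) hcj.le)
  rw [step1] at hFsum
  obtain ⟨e, he_inj, he_ind, he_cov⟩ := extend_basis Z hZspan F hFind
  set MZ : Matrix (Fin r) (Fin r) ℝ := Matrix.of (fun a p => Z (e p) a) with hMZ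
  set Mz : Matrix (Fin r) (Fin r) ℝ := Matrix.of (fun a p => z (e p) a) with hMz
  have hdetZ : MZ.det ≠ 0 := det_ne_zero_of_indep Z e he_ind
  have hsg : Real.sign Mz.det = Real.sign MZ.det := hsign e
  have hdetz : Mz.det ≠ 0 := fun h0 => hdetZ ((sign_pair hsg).2.mp h0)
  set μ : Fin r → ℝ := fun p => if e p ∈ F then -b (e p) else 0 with hμ
  have claim1 : MZ.mulVec μ = Z j := by
    funext a
    have hstep : MZ.mulVec μ a
        = ∑ p ∈ Finset.univ.filter (fun p => e p ∈ F), Z (e p) a * (-(b (e p))) := by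
      rw [Finset.sum_filter]
      simp only [Matrix.mulVec, dotProduct]
      exact Finset.sum_congr rfl fun p _ => by
        by_cases hp : e p ∈ F <;> simp [hμ, hp, hMZ]
    have hbij : ∑ p ∈ Finset.univ.filter (fun p => e p ∈ F), Z (e p) a * (-(b (e p)))
        = ∑ i ∈ F, Z i a * (-(b i)) := by
      apply Finset.sum_bij (fun p _ => e p)
      · intro p hp; exact (Finset.mem_filter.1 hp).2
      · intro p hp q hq hpq; exact he_inj hpq
      · intro i hi
        obtain ⟨p, hp⟩ := he_cov i hi
        exact ⟨p, Finset.mem_filter.2 ⟨Finset.mem_univ p, by rw [hp]; exact hi⟩, hp⟩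
      · intro p hp; rfl
    have hFa : ∑ i ∈ F, b i * Z i a = -Z j a := by
      have := congrFun hFsum a
      simpa [Finset.sum_apply] using this
    rw [hstep, hbij]
    have : ∑ i ∈ F, Z i a * (-(b i)) = -∑ i ∈ F, b i * Z i a := by
      rw [← Finset.sum_neg_distrib]
      exact Finset.sum_congr rfl fun i _ => by ring
    rw [this, hFa, neg_neg]
  set κ : Fin r → ℝ := MZ.cramer (Z j) with hκ
  have hMκ : MZ.mulVec κ = MZ.det • (Z j) := Matrix.mulVec_cramer MZ (Z j)
  have hκμ : κ = MZ.det • μ := by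
    by_contra hne
    have h0 : MZ.mulVec (κ - MZ.det • μ) = 0 := by
      rw [Matrix.mulVec_sub, hMκ, Matrix.mulVec_smul, claim1, sub_self]
    exact hdetZ (Matrix.exists_mulVec_eq_zero_iff.1 ⟨κ - MZ.det • μ, sub_ne_zero.2 hne, h0⟩)
  set lam : Fin r → ℝ := Mz.cramer (z j) with hlam
  have hMlam : Mz.mulVec lam = Mz.det • (z j) := Matrix.mulVec_cramer Mz (z j)
  have hsignp : ∀ p, Real.sign (lam p) = Real.sign (κ p) := by
    intro p
    have hZup : MZ.updateCol p (Z j) = Matrix.of (fun a q => Z (Function.update e p j q) a) := by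
      ext a q
      rw [Matrix.updateCol_apply]
      by_cases hq : q = p <;> simp [Function.update_apply, hq, hMZ]
    have hzup : Mz.updateCol p (z j) = Matrix.of (fun a q => z (Function.update e p j q) a) := by
      ext a q
      rw [Matrix.updateCol_apply]
      by_cases hq : q = p <;> simp [Function.update_apply, hq, hMz]
    have h1 : κ p = (Matrix.of (fun a q => Z (Function.update e p j q) a)).det := by
      rw [hκ, Matrix.cramer_apply, hZup]
    have h2 : lam p = (Matrix.of (fun a q => z (Function.update e p j q) a)).det := by
      rw [hlam, Matrix.cramer_apply, hzup]
    rw [h1, h2]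
    exact hsign (Function.update e p j)
  -- final computation
  have expand : Mz.det * (∑ a, z j a * v a) = ∑ p, lam p * (∑ a, z (e p) a * v a) := by
    calc Mz.det * (∑ a, z j a * v a)
        = ∑ a, (Mz.det * z j a) * v a := by
          rw [Finset.mul_sum]; exact Finset.sum_congr rfl fun a _ => by ring
      _ = ∑ a, (Mz.mulVec lam) a * v a := by
          exact Finset.sum_congr rfl fun a _ => by rw [hMlam]; rfl
      _ = ∑ a, (∑ p, z (e p) a * lam p) * v a := by
          exact Finset.sum_congr rfl fun a _ => by
            simp [Matrix.mulVec, dotProduct, hMz]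
      _ = ∑ p, lam p * (∑ a, z (e p) a * v a) := by
          have h5 : ∀ a : Fin r, (∑ p, z (e p) a * lam p) * v a
              = ∑ p, z (e p) a * lam p * v a := fun a => Finset.sum_mul _ _ _
          simp_rw [h5]
          rw [Finset.sum_comm]
          exact Finset.sum_congr rfl fun p _ => by
            rw [Finset.mul_sum]
            exact Finset.sum_congr rfl fun a _ => by ring
  have key : Mz.det * (Mz.det * (∑ a, z j a * v a)) ≤ 0 := by
    rw [expand, Finset.mul_sum]
    apply Finset.sum_nonpos
    intro p _
    by_cases hp : e p ∈ F
    · have hκp : κ p = MZ.det * (-(b (e p))) := by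
        rw [hκμ]; simp [hμ, hp]
      have hcep : c (e p) ≠ 0 := (Finset.mem_filter.1 (hFs hp)).2
      have hdot : 0 ≤ ∑ a, z (e p) a * v a := hv (e p) hcep
      have hbp : 0 < b (e p) := hbpos _ hp
      have hsp := sign_pair (hsignp p)
      have hsgp := sign_pair hsg
      have hML : Mz.det * lam p ≤ 0 := by
        rcases lt_or_gt_of_ne hdetZ with hZneg | hZpos
        · have hAz : Mz.det < 0 := by
            rcases lt_trichotomy Mz.det 0 with h | h | h
            · exact h
            · exact absurd (hsgp.2.mp h) (ne_of_lt hZneg)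
            · exact absurd (hsgp.1.mp h) (not_lt.2 (le_of_lt hZneg))
          have hκpos : 0 < κ p := by rw [hκp]; nlinarith
          have hlampos : 0 < lam p := hsp.1.mpr hκpos
          nlinarith
        · have hAz : 0 < Mz.det := hsgp.1.mpr hZpos
          have hκneg : κ p < 0 := by rw [hκp]; nlinarith
          have hlamneg : lam p < 0 := by
            rcases lt_trichotomy (lam p) 0 with h | h | h
            · exact h
            · exact absurd (hsp.2.mp h) (ne_of_lt hκneg)
            · exact absurd (hsp.1.mp h) (not_lt.2 (le_of_lt hκneg))
          nlinarith
      calc Mz.det * (lam p * (∑ a, z (e p) a * v a))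
          = (Mz.det * lam p) * (∑ a, z (e p) a * v a) := by ring
        _ ≤ 0 := mul_nonpos_of_nonpos_of_nonneg hML hdot
    · have hκp : κ p = 0 := by rw [hκμ]; simp [hμ, hp]
      have hlamp : lam p = 0 := (sign_pair (hsignp p)).2.mpr hκp
      simp [hlamp]
  have hsq : 0 < Mz.det * Mz.det := mul_self_pos.2 hdetz
  nlinarith

/-- key orthogonality lemma: a linear dependence of `Z` cannot have signs matching
a covector of `z` nontrivially. -/
lemma lemB (z Z : Fin n → Fin r → ℝ)
    (hZspan : Submodule.span ℝ (Set.range Z) = ⊤)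
    (hsign : ∀ f : Fin r → Fin n,
      Real.sign (Matrix.det (Matrix.of fun a b => z (f b) a)) =
      Real.sign (Matrix.det (Matrix.of fun a b => Z (f b) a)))
    (c : Fin n → ℝ) (v : Fin r → ℝ)
    (hdep : ∑ i, c i • Z i = 0)
    (h : ∀ i, 0 ≤ c i * (∑ a, z i a * v a)) :
    ∀ i, c i * (∑ a, z i a * v a) = 0 := by
  classical
  by_contra hcon
  push_neg at hcon
  obtain ⟨j, hjne⟩ := hcon
  have hjpos : 0 < c j * (∑ a, z j a * v a) := (h j).lt_of_ne' hjne
  set ε : Fin n → ℝ := fun i => if 0 ≤ c i then 1 else -1 with hε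
  have hε2 : ∀ i, ε i * ε i = 1 := by
    intro i; by_cases h0 : 0 ≤ c i <;> simp [hε, h0]
  have hεne : ∀ i, ε i ≠ 0 := by
    intro i; by_cases h0 : 0 ≤ c i <;> simp [hε, h0]
  set z' : Fin n → Fin r → ℝ := fun i => ε i • z i with hz'
  set Z' : Fin n → Fin r → ℝ := fun i => ε i • Z i with hZ'
  have hZ'span : Submodule.span ℝ (Set.range Z') = ⊤ := by
    rw [eq_top_iff, ← hZspan]
    apply Submodule.span_le.mpr
    rintro x ⟨i, rfl⟩
    have hx : Z i = ε i • Z' i := by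
      rw [hZ']; simp only [smul_smul, hε2 i, one_smul]
    rw [hx]
    exact Submodule.smul_mem _ _ (Submodule.subset_span ⟨i, rfl⟩)
  have hsign' : ∀ f : Fin r → Fin n,
      Real.sign (Matrix.det (Matrix.of fun a b => z' (f b) a)) =
      Real.sign (Matrix.det (Matrix.of fun a b => Z' (f b) a)) := by
    intro f
    have hz'det : (Matrix.of fun a b => z' (f b) a).det
        = (∏ b, ε (f b)) * (Matrix.of fun a b => z (f b) a).det := by
      have hm : (Matrix.of fun a b => z' (f b) a)
          = Matrix.of fun i q => (fun b => ε (f b)) q * (Matrix.of fun a b => z (f b) a) i q := by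
        ext a q; simp [hz']
      rw [hm, Matrix.det_mul_row]
    have hZ'det : (Matrix.of fun a b => Z' (f b) a).det
        = (∏ b, ε (f b)) * (Matrix.of fun a b => Z (f b) a).det := by
      have hm : (Matrix.of fun a b => Z' (f b) a)
          = Matrix.of fun i q => (fun b => ε (f b)) q * (Matrix.of fun a b => Z (f b) a) i q := by
        ext a q; simp [hZ']
      rw [hm, Matrix.det_mul_row]
    have hprod : (∏ b, ε (f b)) = 1 ∨ (∏ b, ε (f b)) = -1 := by
      apply Finset.prod_induction _ (fun x => x = 1 ∨ x = -1)
      · rintro x y (rfl | rfl) (rfl | rfl) <;> norm_num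
      · left; rfl
      · intro b _
        by_cases h0 : 0 ≤ c (f b) <;> simp [hε, h0]
    rw [hz'det, hZ'det]
    rcases hprod with hp | hp
    · rw [hp, one_mul, one_mul]; exact hsign f
    · rw [hp]
      simp only [neg_one_mul, Real.sign_neg]
      rw [hsign f]
  set c' : Fin n → ℝ := fun i => ε i * c i with hc'def
  have hc' : ∀ i, 0 ≤ c' i := by
    intro i
    by_cases h0 : 0 ≤ c i
    · simp [hc'def, hε, h0]
    · push_neg at h0
      simp only [hc'def, hε, if_neg (not_le.2 h0)]
      nlinarith
  have hdep' : ∑ i, c' i • Z' i = 0 := by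
    rw [← hdep]
    apply Finset.sum_congr rfl
    intro i _
    rw [hc'def, hZ', smul_smul]
    have : ε i * c i * ε i = c i := by
      rw [mul_comm (ε i) (c i), mul_assoc, hε2 i, mul_one]
    rw [this]
  have hdots : ∀ i, (∑ a, z' i a * v a) = ε i * (∑ a, z i a * v a) := by
    intro i
    rw [Finset.mul_sum]
    exact Finset.sum_congr rfl fun a _ => by
      simp only [hz', Pi.smul_apply, smul_eq_mul]; ring
  have hv' : ∀ i, c' i ≠ 0 → 0 ≤ ∑ a, z' i a * v a := by
    intro i hci'
    have hci : c i ≠ 0 := by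
      intro h0; apply hci'; simp [hc'def, h0]
    rw [hdots]
    by_cases h0 : 0 ≤ c i
    · have hcpos : 0 < c i := h0.lt_of_ne' hci
      have := h i
      simp only [hε, if_pos h0, one_mul]
      nlinarith
    · push_neg at h0
      have := h i
      simp only [hε, if_neg (not_le.2 h0), neg_one_mul]
      nlinarith
  have hcj : c j ≠ 0 := by
    intro h0; rw [h0] at hjpos; simp at hjpos
  have hcj' : c' j ≠ 0 := by
    simp only [hc'def]
    exact mul_ne_zero (hεne j) hcj
  have hjv' : 0 < ∑ a, z' j a * v a := by
    rw [hdots]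
    by_cases h0 : 0 ≤ c j
    · have hcpos : 0 < c j := h0.lt_of_ne' hcj
      simp only [hε, if_pos h0, one_mul]
      nlinarith
    · push_neg at h0
      simp only [hε, if_neg (not_le.2 h0), neg_one_mul]
      nlinarith
  exact lemB0 z' Z' hZ'span hsign' c' hc' hdep' v hv' j hcj' hjv'

/-- if `Z i = 0` then `z i = 0` (loops correspond under equal chirotopes) -/
lemma zero_transfer (z Z : Fin n → Fin r → ℝ)
    (hzspan : Submodule.span ℝ (Set.range z) = ⊤)
    (hsign : ∀ f : Fin r → Fin n,
      Real.sign (Matrix.det (Matrix.of fun a b => z (f b) a)) =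
      Real.sign (Matrix.det (Matrix.of fun a b => Z (f b) a)))
    (i : Fin n) (hZi : Z i = 0) : z i = 0 := by
  classical
  by_contra hzi
  have hind : LinearIndependent ℝ (fun x : ({i} : Finset (Fin n)) => z x) := by
    apply Fintype.linearIndependent_iff.2
    intro g hg x
    have hx : (x : Fin n) = i := Finset.mem_singleton.1 x.2
    have huniv : (Finset.univ : Finset (({i} : Finset (Fin n)) : Type)) = {x} := by
      apply Finset.eq_singleton_iff_unique_mem.2
      exact ⟨Finset.mem_univ x, fun y _ =>
        Subtype.ext (by rw [Finset.mem_singleton.1 y.2, hx])⟩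
    rw [huniv, Finset.sum_singleton, hx] at hg
    by_contra hgx
    exact hzi ((smul_eq_zero.1 hg).resolve_left hgx)
  obtain ⟨e, he_inj, he_ind, he_cov⟩ := extend_basis z hzspan {i} hind
  have hdetz : Matrix.det (Matrix.of fun a b => z (e b) a) ≠ 0 :=
    det_ne_zero_of_indep z e he_ind
  obtain ⟨b0, hb0⟩ := he_cov i (Finset.mem_singleton_self i)
  have hdetZ : Matrix.det (Matrix.of fun a b => Z (e b) a) = 0 := by
    apply Matrix.det_eq_zero_of_column_eq_zero b0
    intro a
    simp [hb0, hZi]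
  have := hsign e
  rw [hdetZ, Real.sign_zero, Real.sign_eq_zero_iff] at this
  exact hdetz this

/-- from pointedness: a strictly positive functional on the nonzero generators -/
lemma sep_functional (Z : Fin n → Fin r → ℝ)
    (hpointed : ∀ w : Fin r → ℝ,
      (∃ a : Fin n → ℝ, (∀ i, 0 ≤ a i) ∧ w = ∑ i, a i • Z i) →
      (∃ a : Fin n → ℝ, (∀ i, 0 ≤ a i) ∧ -w = ∑ i, a i • Z i) → w = 0) :
    ∃ f : (Fin r → ℝ) →L[ℝ] ℝ, ∀ i, Z i ≠ 0 → 0 < f (Z i) := by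
  classical
  by_cases hne : ∃ i, Z i ≠ 0
  swap
  · push_neg at hne
    exact ⟨0, fun i hi => absurd (hne i) hi⟩
  set T : Finset (Fin r → ℝ) := (Finset.univ.filter (fun i => Z i ≠ 0)).image Z with hT
  -- global index map
  have hidx : ∀ y : Fin r → ℝ, ∃ i : Fin n, y ∈ T → (Z i = y ∧ Z i ≠ 0) := by
    intro y
    by_cases hy : y ∈ T
    · rw [hT] at hy
      obtain ⟨i, hi, rfl⟩ := Finset.mem_image.1 hy
      exact ⟨i, fun _ => ⟨rfl, (Finset.mem_filter.1 hi).2⟩⟩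
    · obtain ⟨i0, _⟩ := hne
      exact ⟨i0, fun h => absurd h hy⟩
  choose ι hι using hidx
  have hzero : (0 : Fin r → ℝ) ∉ convexHull ℝ (T : Set (Fin r → ℝ)) := by
    intro h0
    rw [Finset.convexHull_eq] at h0
    obtain ⟨w, hw0, hw1, hwc⟩ := h0
    have hex : ∃ y ∈ T, 0 < w y := by
      by_contra hc
      push_neg at hc
      have : ∑ y ∈ T, w y = 0 :=
        Finset.sum_eq_zero fun y hy => le_antisymm (hc y hy) (hw0 y hy)
      rw [hw1] at this; norm_num at this
    obtain ⟨y0, hy0T, hwy0⟩ := hex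
    have hcm : ∑ y ∈ T, w y • y = 0 := by
      rw [Finset.centerMass_eq_of_sum_1 _ id hw1] at hwc
      simpa using hwc
    set W : Fin r → ℝ := w y0 • y0 with hW
    have h1 : ∃ a : Fin n → ℝ, (∀ i, 0 ≤ a i) ∧ W = ∑ i, a i • Z i := by
      refine ⟨fun i => if ι y0 = i then w y0 else 0, ?_, ?_⟩
      · intro i; dsimp only; split_ifs with h
        exacts [le_of_lt hwy0, le_rfl]
      · show W = ∑ i, (if ι y0 = i then w y0 else 0) • Z i
        have hcongr : ∀ i ∈ Finset.univ, (if ι y0 = i then w y0 else 0) • Z i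
            = if ι y0 = i then w y0 • Z i else 0 := by
          intro i _; split_ifs <;> simp
        rw [Finset.sum_congr rfl hcongr, Finset.sum_ite_eq Finset.univ (ι y0) _]
        simp [hW, (hι y0 hy0T).1]
    have h2 : ∃ a : Fin n → ℝ, (∀ i, 0 ≤ a i) ∧ -W = ∑ i, a i • Z i := by
      refine ⟨fun i => ∑ y ∈ T.erase y0, if ι y = i then w y else 0, ?_, ?_⟩
      · intro i
        dsimp only
        apply Finset.sum_nonneg
        intro y hy
        split_ifs with h
        exacts [hw0 y (Finset.mem_of_mem_erase hy), le_rfl]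
      · show -W = ∑ i, (∑ y ∈ T.erase y0, if ι y = i then w y else 0) • Z i
        have hswap : ∑ i, (∑ y ∈ T.erase y0, if ι y = i then w y else 0) • Z i
            = ∑ y ∈ T.erase y0, w y • y := by
          calc ∑ i, (∑ y ∈ T.erase y0, if ι y = i then w y else 0) • Z i
              = ∑ i, ∑ y ∈ T.erase y0, (if ι y = i then w y else 0) • Z i :=
                Finset.sum_congr rfl fun i _ => Finset.sum_smul
            _ = ∑ y ∈ T.erase y0, ∑ i, (if ι y = i then w y else 0) • Z i :=
                Finset.sum_comm
            _ = ∑ y ∈ T.erase y0, w y • y := by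
                apply Finset.sum_congr rfl
                intro y hy
                have hcongr : ∀ i ∈ Finset.univ, (if ι y = i then w y else 0) • Z i
                    = if ι y = i then w y • Z i else 0 := by
                  intro i _; split_ifs <;> simp
                rw [Finset.sum_congr rfl hcongr, Finset.sum_ite_eq Finset.univ (ι y) _]
                simp [(hι y (Finset.mem_of_mem_erase hy)).1]
        rw [hswap]
        have hadd : w y0 • y0 + ∑ y ∈ T.erase y0, w y • y = 0 := by
          rw [Finset.add_sum_erase T (fun y => w y • y) hy0T]
          exact hcm
        have hSig : ∑ y ∈ T.erase y0, w y • y = -(w y0 • y0) :=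
          eq_neg_of_add_eq_zero_left (by rw [add_comm]; exact hadd)
        rw [hSig, hW]
    have hptd := hpointed W h1 h2
    rw [hW] at hptd
    have hy0ne : y0 ≠ 0 := by
      have := (hι y0 hy0T).2
      rw [(hι y0 hy0T).1] at this
      exact this
    rcases smul_eq_zero.1 hptd with h | h
    · exact absurd h (ne_of_gt hwy0)
    · exact hy0ne h
  have hconv : Convex ℝ (convexHull ℝ (T : Set (Fin r → ℝ))) := convex_convexHull _ _
  have hclosed : IsClosed (convexHull ℝ (T : Set (Fin r → ℝ))) :=
    (T.finite_toSet.isCompact_convexHull ℝ).isClosed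
  obtain ⟨f, u, hfu, hfy⟩ := geometric_hahn_banach_point_closed hconv hclosed hzero
  refine ⟨f, fun i hi => ?_⟩
  have hZiT : Z i ∈ convexHull ℝ (T : Set (Fin r → ℝ)) := by
    apply subset_convexHull
    rw [hT]
    simp only [Finset.coe_image, Set.mem_image]
    exact ⟨i, by simp [hi], rfl⟩
  have hval := hfy (Z i) hZiT
  simp only [map_zero] at hfu
  linarith




/-- the linear functional `u ↦ ∑ a, z i a * u a` as a continuous linear map -/
noncomputable def ell (z : Fin n → Fin r → ℝ) (i : Fin n) : (Fin r → ℝ) →L[ℝ] ℝ :=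
  ∑ a, z i a • (ContinuousLinearMap.proj a : (Fin r → ℝ) →L[ℝ] ℝ)

lemma ell_apply (z : Fin n → Fin r → ℝ) (i : Fin n) (v : Fin r → ℝ) : ell z i v = ∑ a, z i a * v a := by
  simp [ell, ContinuousLinearMap.sum_apply]

/-- derivative of φ at u -/
noncomputable def Dphi (z Z : Fin n → Fin r → ℝ) (u : Fin r → ℝ) : (Fin r → ℝ) →L[ℝ] (Fin r → ℝ) :=
  ∑ i, Real.exp (ell z i u) • ((ell z i).smulRight (Z i))

lemma Dphi_apply (z Z : Fin n → Fin r → ℝ) (u v : Fin r → ℝ) :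
    Dphi z Z u v = ∑ i, (Real.exp (ell z i u) * ell z i v) • Z i := by
  simp [Dphi, ContinuousLinearMap.sum_apply, smul_smul]

lemma hasFDerivAt_phi (z Z : Fin n → Fin r → ℝ) (u : Fin r → ℝ) :
    HasFDerivAt (fun u : Fin r → ℝ => ∑ i, Real.exp (∑ a, z i a * u a) • Z i)
      (Dphi z Z u) u := by
  have heq : (fun u : Fin r → ℝ => ∑ i, Real.exp (∑ a, z i a * u a) • Z i)
      = fun u : Fin r → ℝ => ∑ i, Real.exp (ell z i u) • Z i := by
    funext u
    exact Finset.sum_congr rfl fun i _ => by rw [ell_apply]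
  rw [heq, Dphi]
  apply HasFDerivAt.fun_sum
  intro i _
  have h1 : HasFDerivAt (fun u : Fin r → ℝ => ell z i u) (ell z i) u :=
    (ell z i).hasFDerivAt
  have h2 : HasFDerivAt (fun u : Fin r → ℝ => Real.exp (ell z i u))
      (Real.exp (ell z i u) • ell z i) u :=
    (Real.hasDerivAt_exp (ell z i u)).comp_hasFDerivAt u h1
  have h3 := h2.smul_const (Z i)
  convert h3 using 1
  ext v a
  simp [ContinuousLinearMap.smulRight_apply, smul_smul, mul_assoc]

lemma Dphi_inj (z Z : Fin n → Fin r → ℝ) (hzspan : Submodule.span ℝ (Set.range z) = ⊤)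
    (hZspan : Submodule.span ℝ (Set.range Z) = ⊤)
    (hsign : ∀ f : Fin r → Fin n,
      Real.sign (Matrix.det (Matrix.of fun a b => z (f b) a)) =
      Real.sign (Matrix.det (Matrix.of fun a b => Z (f b) a)))
    (u : Fin r → ℝ) : Function.Injective (Dphi z Z u) := by
  have hker : ∀ v, Dphi z Z u v = 0 → v = 0 := by
    intro v hv
    set c : Fin n → ℝ := fun i => Real.exp (ell z i u) * ell z i v with hc
    have hdep : ∑ i, c i • Z i = 0 := by rw [← Dphi_apply]; exact hv
    have hsq : ∀ i, c i * (∑ a, z i a * v a)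
        = Real.exp (ell z i u) * (∑ a, z i a * v a)^2 := by
      intro i; rw [hc]; dsimp only; rw [ell_apply z i v]; ring
    have hnn : ∀ i, 0 ≤ c i * (∑ a, z i a * v a) := by
      intro i; rw [hsq]; positivity
    have hlem := lemB z Z hZspan hsign c v hdep hnn
    apply span_dot z hzspan v
    intro i
    have h0 := hlem i
    rw [hsq] at h0
    have hexp := Real.exp_pos (ell z i u)
    have hsq0 : (∑ a, z i a * v a)^2 = 0 := by
      rcases mul_eq_zero.1 h0 with h | h
      · exact absurd h (ne_of_gt hexp)
      · exact h
    exact pow_eq_zero_iff (by norm_num) |>.1 hsq0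
  intro v v' hvv
  have h1 : Dphi z Z u (v - v') = 0 := by rw [map_sub, hvv, sub_self]
  exact sub_eq_zero.1 (hker _ h1)



set_option maxHeartbeats 2000000 in
lemma closure_range (z Z : Fin n → Fin r → ℝ)
    (hzspan : Submodule.span ℝ (Set.range z) = ⊤)
    (hZspan : Submodule.span ℝ (Set.range Z) = ⊤)
    (hpointed : ∀ w : Fin r → ℝ,
      (∃ a : Fin n → ℝ, (∀ i, 0 ≤ a i) ∧ w = ∑ i, a i • Z i) →
      (∃ a : Fin n → ℝ, (∀ i, 0 ≤ a i) ∧ -w = ∑ i, a i • Z i) → w = 0)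
    (hsign : ∀ f : Fin r → Fin n,
      Real.sign (Matrix.det (Matrix.of fun a b => z (f b) a)) =
      Real.sign (Matrix.det (Matrix.of fun a b => Z (f b) a)))
    (w : Fin r → ℝ) (hw : ∃ b : Fin n → ℝ, (∀ i, 0 < b i) ∧ w = ∑ i, b i • Z i)
    (hcl : w ∈ closure (Set.range
      (fun u : Fin r → ℝ => ∑ i, Real.exp (∑ a, z i a * u a) • Z i))) :
    w ∈ Set.range (fun u : Fin r → ℝ => ∑ i, Real.exp (∑ a, z i a * u a) • Z i) := by
  classical
  set φ : (Fin r → ℝ) → (Fin r → ℝ) :=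
    fun u => ∑ i, Real.exp (∑ a, z i a * u a) • Z i with hφ
  obtain ⟨x, hx_mem, hx_lim⟩ := mem_closure_iff_seq_limit.1 hcl
  choose u hu using hx_mem
  obtain ⟨f, hf⟩ := sep_functional Z hpointed
  have hfnonneg : ∀ i, 0 ≤ f (Z i) := by
    intro i; by_cases h : Z i = 0
    · rw [h, map_zero]
    · exact (hf i h).le
  have hfval : ∀ k, f (x k) = ∑ i, Real.exp (∑ a, z i a * u k a) * f (Z i) := by
    intro k
    rw [← hu k, hφ]
    simp [map_sum, map_smul, smul_eq_mul]
  have hftend : Tendsto (fun k => f (x k)) atTop (nhds (f w)) :=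
    (f.continuous.tendsto w).comp hx_lim
  obtain ⟨C, hC⟩ := hftend.bddAbove_range
  have hCbound : ∀ k, f (x k) ≤ C := fun k => hC ⟨k, rfl⟩
  have hBex : ∀ i, ∃ B : ℝ, ∀ k, Real.exp (∑ a, z i a * u k a) ≤ B := by
    intro i
    by_cases hZi : Z i = 0
    · refine ⟨1, fun k => ?_⟩
      have hzi : z i = 0 := zero_transfer z Z hzspan hsign i hZi
      simp [hzi]
    · refine ⟨C / f (Z i), fun k => ?_⟩
      have hsingle : Real.exp (∑ a, z i a * u k a) * f (Z i) ≤ f (x k) := by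
        rw [hfval k]
        exact Finset.single_le_sum
          (f := fun j => Real.exp (∑ a, z j a * u k a) * f (Z j))
          (fun j _ => mul_nonneg (Real.exp_pos _).le (hfnonneg j)) (mem_univ i)
      rw [le_div_iff₀ (hf i hZi)]
      exact hsingle.trans (hCbound k)
  choose B hB using hBex
  set g : ℕ → (Fin n → ℝ) := fun k i => Real.exp (∑ a, z i a * u k a) with hg
  have hgS : ∀ k, g k ∈ Set.univ.pi (fun i => Set.Icc (0:ℝ) (B i)) := by
    intro k i _
    exact ⟨(Real.exp_pos _).le, hB i k⟩
  obtain ⟨aa, haS, σ, hσ, hgt⟩ :=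
    (isCompact_univ_pi (fun i : Fin n => isCompact_Icc)).tendsto_subseq hgS
  have hφg : ∀ k, φ (u k) = ∑ i, g k i • Z i := fun k => rfl
  have hxσ : Tendsto (fun k => x (σ k)) atTop (nhds w) := hx_lim.comp hσ.tendsto_atTop
  have hsum_lim : Tendsto (fun k => ∑ i, g (σ k) i • Z i) atTop
      (nhds (∑ i, aa i • Z i)) := by
    apply tendsto_finset_sum
    intro i _
    exact ((tendsto_pi_nhds.1 hgt i).smul_const (Z i))
  have hwa : ∑ i, aa i • Z i = w := by
    apply tendsto_nhds_unique hsum_lim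
    have heq : (fun k => ∑ i, g (σ k) i • Z i) = fun k => x (σ k) := by
      funext k; rw [← hφg (σ k), hu (σ k)]
    rw [heq]; exact hxσ
  by_cases hapos : ∀ i, 0 < aa i
  · -- good case : solve the linear system in the limit
    set T : (Fin r → ℝ) →ₗ[ℝ] (Fin n → ℝ) :=
      { toFun := fun v i => ∑ a, z i a * v a
        map_add' := by
          intro v v'; funext i
          simp [Pi.add_apply, mul_add, Finset.sum_add_distrib]
        map_smul' := by
          intro mc v; funext i
          simp only [Pi.smul_apply, smul_eq_mul, RingHom.id_apply, Finset.mul_sum]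
          exact Finset.sum_congr rfl fun a _ => by ring } with hT
    have hclosedT : IsClosed ((LinearMap.range T : Submodule ℝ (Fin n → ℝ)) : Set (Fin n → ℝ)) :=
      Submodule.closed_of_finiteDimensional _
    have hTlim : Tendsto (fun k => T (u (σ k))) atTop
        (nhds (fun i => Real.log (aa i))) := by
      rw [tendsto_pi_nhds]
      intro i
      have h1 : (fun k => T (u (σ k)) i) = fun k => Real.log (g (σ k) i) := by
        funext k
        show (∑ a, z i a * u (σ k) a) = Real.log (Real.exp (∑ a, z i a * u (σ k) a))
        rw [Real.log_exp]
      rw [h1]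
      exact ((Real.continuousAt_log (ne_of_gt (hapos i))).tendsto).comp
        (tendsto_pi_nhds.1 hgt i)
    have hmem : (fun i => Real.log (aa i)) ∈
        ((LinearMap.range T : Submodule ℝ (Fin n → ℝ)) : Set (Fin n → ℝ)) :=
      hclosedT.mem_of_tendsto hTlim
        (Filter.Eventually.of_forall fun k => LinearMap.mem_range_self T (u (σ k)))
    obtain ⟨ustar, hustar⟩ := hmem
    refine ⟨ustar, ?_⟩
    show φ ustar = w
    rw [hφ, ← hwa]
    apply Finset.sum_congr rfl
    intro i _
    congr 1
    have h2 : (∑ a, z i a * ustar a) = Real.log (aa i) := congrFun hustar i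
    rw [h2, Real.exp_log (hapos i)]
  · -- degenerate case: contradiction
    exfalso
    push_neg at hapos
    obtain ⟨j, hjle⟩ := hapos
    have haj : aa j = 0 := le_antisymm hjle (haS j (Set.mem_univ j)).1
    have hgj : Tendsto (fun k => g (σ k) j) atTop (nhds 0) := by
      rw [← haj]; exact tendsto_pi_nhds.1 hgt j
    have hdj : Tendsto (fun k => ∑ a, z j a * u (σ k) a) atTop atBot :=
      Real.tendsto_exp_comp_nhds_zero.1 hgj
    set K := (∑ a, |z j a|) + 1 with hK
    have hKpos : 0 < K := by
      rw [hK]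
      have : 0 ≤ ∑ a, |z j a| := Finset.sum_nonneg fun a _ => abs_nonneg _
      linarith
    have hdle : ∀ (vv : Fin r → ℝ), |∑ a, z j a * vv a| ≤ K * ‖vv‖ := by
      intro vv
      calc |∑ a, z j a * vv a| ≤ ∑ a, |z j a * vv a| := Finset.abs_sum_le_sum_abs _ _
        _ ≤ ∑ a, |z j a| * ‖vv‖ := by
            apply Finset.sum_le_sum
            intro a _
            rw [abs_mul]
            exact mul_le_mul_of_nonneg_left (norm_le_pi_norm vv a) (abs_nonneg _)
        _ = (∑ a, |z j a|) * ‖vv‖ := (Finset.sum_mul _ _ _).symm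
        _ ≤ K * ‖vv‖ := by
            have h0 := norm_nonneg vv
            rw [hK]; nlinarith
    have hnorm_top : Tendsto (fun k => ‖u (σ k)‖) atTop atTop := by
      apply tendsto_atTop_mono
        (f := fun k => (-(∑ a, z j a * u (σ k) a)) / K)
      · intro k
        have h1 := hdle (u (σ k))
        have h2 : -(∑ a, z j a * u (σ k) a) ≤ K * ‖u (σ k)‖ :=
          (neg_le_abs _).trans h1
        rw [div_le_iff₀ hKpos]
        linarith
      · exact (tendsto_neg_atBot_atTop.comp hdj).atTop_div_const hKpos
    set vseq : ℕ → (Fin r → ℝ) := fun k => ‖u (σ k)‖⁻¹ • u (σ k) with hvseq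
    have hvball : ∀ k, vseq k ∈ Metric.closedBall (0 : Fin r → ℝ) 1 := by
      intro k
      rw [Metric.mem_closedBall, dist_zero_right, hvseq]
      dsimp only
      rw [norm_smul, norm_inv, norm_norm]
      rcases eq_or_ne (u (σ k)) 0 with h | h
      · simp [h]
      · rw [inv_mul_cancel₀ (norm_ne_zero_iff.2 h)]
    obtain ⟨vbar, _, τ, hτ, hvt⟩ :=
      (isCompact_closedBall (0 : Fin r → ℝ) 1).tendsto_subseq hvball
    have hρtop : Tendsto (fun k => ‖u (σ (τ k))‖) atTop atTop :=
      hnorm_top.comp hτ.tendsto_atTop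
    have hvnorm1 : ‖vbar‖ = 1 := by
      have h1 : Tendsto (fun k => ‖vseq (τ k)‖) atTop (nhds ‖vbar‖) :=
        (continuous_norm.tendsto vbar).comp hvt
      have h2 : ∀ᶠ k in atTop, ‖vseq (τ k)‖ = 1 := by
        filter_upwards [hρtop.eventually_ge_atTop 1] with k hk
        have hne : u (σ (τ k)) ≠ 0 := by
          intro h0; rw [h0, norm_zero] at hk; linarith
        rw [hvseq]
        dsimp only
        rw [norm_smul, norm_inv, norm_norm, inv_mul_cancel₀ (norm_ne_zero_iff.2 hne)]
      exact tendsto_nhds_unique ((tendsto_congr' h2).1 h1) tendsto_const_nhds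
    have hvbar_ne : vbar ≠ 0 := by
      intro h; rw [h, norm_zero] at hvnorm1; norm_num at hvnorm1
    have hdot_lim : ∀ i, Tendsto (fun k => ∑ a, z i a * vseq (τ k) a) atTop
        (nhds (∑ a, z i a * vbar a)) := by
      intro i
      have hcont : Continuous (fun vv : Fin r → ℝ => ∑ a, z i a * vv a) :=
        continuous_finset_sum _ fun a _ => continuous_const.mul (continuous_apply a)
      exact (hcont.tendsto vbar).comp hvt
    have hdot_div : ∀ i, ∀ k, 1 ≤ ‖u (σ (τ k))‖ →
        (∑ a, z i a * vseq (τ k) a) = (∑ a, z i a * u (σ (τ k)) a) / ‖u (σ (τ k))‖ := by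
      intro i k hk
      rw [hvseq]
      dsimp only
      rw [Finset.sum_div]
      apply Finset.sum_congr rfl
      intro a _
      rw [Pi.smul_apply, smul_eq_mul]
      field_simp
    have hdotle : ∀ i, (∑ a, z i a * vbar a) ≤ 0 := by
      intro i
      have hBpos : 0 < B i := lt_of_lt_of_le (Real.exp_pos _) (hB i 0)
      have hdub : ∀ k, (∑ a, z i a * u k a) ≤ Real.log (B i) := by
        intro k
        calc (∑ a, z i a * u k a)
            = Real.log (Real.exp (∑ a, z i a * u k a)) := (Real.log_exp _).symm
          _ ≤ Real.log (B i) := by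
              apply Real.log_le_log (Real.exp_pos _)
              exact hB i k
      apply le_of_tendsto_of_tendsto (hdot_lim i)
        (tendsto_const_nhds.div_atTop hρtop : Tendsto
          (fun k => Real.log (B i) / ‖u (σ (τ k))‖) atTop (nhds 0))
      filter_upwards [hρtop.eventually_ge_atTop 1] with k hk
      rw [hdot_div i k hk]
      have hρpos : (0:ℝ) < ‖u (σ (τ k))‖ := by linarith
      exact (div_le_div_iff_of_pos_right hρpos).2 (hdub (σ (τ k)))
    have hNex : ∃ i, (∑ a, z i a * vbar a) < 0 := by
      by_contra hc
      push_neg at hc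
      have hall0 : ∀ i, ∑ a, z i a * vbar a = 0 :=
        fun i => le_antisymm (hdotle i) (hc i)
      exact hvbar_ne (span_dot z hzspan vbar hall0)
    have hN0 : ∀ i, (∑ a, z i a * vbar a) < 0 → aa i = 0 := by
      intro i hdoti
      have hd_ev : ∀ᶠ k in atTop, (∑ a, z i a * u (σ (τ k)) a)
          ≤ ‖u (σ (τ k))‖ * ((∑ a, z i a * vbar a) / 2) := by
        have hev1 : ∀ᶠ k in atTop,
            (∑ a, z i a * vseq (τ k) a) ≤ (∑ a, z i a * vbar a) / 2 :=
          (hdot_lim i).eventually_le_const (by linarith)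
        filter_upwards [hev1, hρtop.eventually_ge_atTop 1] with k hk1 hk2
        have hρpos : (0:ℝ) < ‖u (σ (τ k))‖ := by linarith
        have hd_eq : (∑ a, z i a * u (σ (τ k)) a)
            = ‖u (σ (τ k))‖ * (∑ a, z i a * vseq (τ k) a) := by
          rw [hdot_div i k hk2, mul_div_cancel₀ _ (ne_of_gt hρpos)]
        rw [hd_eq]
        exact mul_le_mul_of_nonneg_left hk1 (norm_nonneg _)
      have hd_tends : Tendsto (fun k => ∑ a, z i a * u (σ (τ k)) a) atTop atBot := by
        apply tendsto_atBot_mono' atTop hd_ev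
        exact hρtop.atTop_mul_const_of_neg (by linarith : (∑ a, z i a * vbar a) / 2 < 0)
      have hexp0 : Tendsto (fun k => g (σ (τ k)) i) atTop (nhds 0) :=
        Real.tendsto_exp_comp_nhds_zero.2 hd_tends
      have hga : Tendsto (fun k => g (σ (τ k)) i) atTop (nhds (aa i)) :=
        (tendsto_pi_nhds.1 hgt i).comp hτ.tendsto_atTop
      exact tendsto_nhds_unique hga hexp0
    obtain ⟨j2, hj2⟩ := hNex
    obtain ⟨bb, hbpos, hbw⟩ := hw
    set c : Fin n → ℝ := fun i => aa i - bb i with hcdef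
    have hdep : ∑ i, c i • Z i = 0 := by
      simp only [hcdef, sub_smul, Finset.sum_sub_distrib]
      rw [hwa, ← hbw, sub_self]
    have hnn : ∀ i, 0 ≤ c i * (∑ a, z i a * vbar a) := by
      intro i
      rcases (hdotle i).lt_or_eq with hlt | heq0
      · have h0 := hN0 i hlt
        have h1 := hbpos i
        rw [hcdef]
        dsimp only
        rw [h0]
        nlinarith
      · rw [heq0, mul_zero]
    have hall := lemB z Z hZspan hsign c vbar hdep hnn
    have hj2' := hall j2
    rw [hcdef] at hj2'
    dsimp only at hj2'
    rw [hN0 j2 hj2] at hj2'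
    have hbp := hbpos j2
    nlinarith [hj2]

end MonomialConeAux

/-- **Monomial/exponential parametrization of a pointed cone.**
If `z` and `Z` are spanning vector configurations in `ℝ^r` with the same oriented matroid
(all `r × r` determinants have the same sign), and the cone on `Z` is pointed, then
`φ(u) = ∑ i, exp (z i · u) • Z i` is a smooth bijection of `ℝ^r` onto the interior of the
cone spanned by `Z`, with everywhere invertible derivative. -/
theorem stmt_0 (r n : ℕ) (hr : 1 ≤ r) (z Z : Fin n → Fin r → ℝ)
    (hzspan : Submodule.span ℝ (Set.range z) = ⊤)
    (hZspan : Submodule.span ℝ (Set.range Z) = ⊤)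
    (hpointed : ∀ w : Fin r → ℝ,
      (∃ a : Fin n → ℝ, (∀ i, 0 ≤ a i) ∧ w = ∑ i, a i • Z i) →
      (∃ a : Fin n → ℝ, (∀ i, 0 ≤ a i) ∧ -w = ∑ i, a i • Z i) → w = 0)
    (hsign : ∀ f : Fin r → Fin n,
      Real.sign (Matrix.det (Matrix.of fun a b => z (f b) a)) =
      Real.sign (Matrix.det (Matrix.of fun a b => Z (f b) a))) :
    ContDiff ℝ (⊤ : ℕ∞) (fun u : Fin r → ℝ => ∑ i, Real.exp (∑ a, z i a * u a) • Z i) ∧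
    Set.BijOn (fun u : Fin r → ℝ => ∑ i, Real.exp (∑ a, z i a * u a) • Z i)
      Set.univ
      {w : Fin r → ℝ | ∃ a : Fin n → ℝ, (∀ i, 0 < a i) ∧ w = ∑ i, a i • Z i} ∧
    ∀ u : Fin r → ℝ, ∃ L : (Fin r → ℝ) ≃L[ℝ] (Fin r → ℝ),
      HasFDerivAt (fun u : Fin r → ℝ => ∑ i, Real.exp (∑ a, z i a * u a) • Z i)
        (L : (Fin r → ℝ) →L[ℝ] (Fin r → ℝ)) u := by
  classical
  set φ : (Fin r → ℝ) → (Fin r → ℝ) :=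
    fun u => ∑ i, Real.exp (∑ a, z i a * u a) • Z i with hφ
  set C : Set (Fin r → ℝ) :=
    {w : Fin r → ℝ | ∃ a : Fin n → ℝ, (∀ i, 0 < a i) ∧ w = ∑ i, a i • Z i} with hC
  -- smoothness
  have hsmooth : ContDiff ℝ (⊤ : ℕ∞) φ := by
    apply ContDiff.sum
    intro i _
    have h1 : ContDiff ℝ (⊤ : ℕ∞) (fun u : Fin r → ℝ => ∑ a, z i a * u a) := by
      apply ContDiff.sum
      intro a _
      exact contDiff_const.mul (ContinuousLinearMap.proj a :
        (Fin r → ℝ) →L[ℝ] ℝ).contDiff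
    exact (Real.contDiff_exp.comp h1).smul contDiff_const
  -- derivative equivalences
  have hDeq : ∀ u : Fin r → ℝ, ∃ L : (Fin r → ℝ) ≃L[ℝ] (Fin r → ℝ),
      (L : (Fin r → ℝ) →L[ℝ] (Fin r → ℝ)) = Dphi z Z u := by
    intro u
    have hinj : Function.Injective
        ((Dphi z Z u : (Fin r → ℝ) →ₗ[ℝ] (Fin r → ℝ))) :=
      Dphi_inj z Z hzspan hZspan hsign u
    have hbij : Function.Bijective
        ((Dphi z Z u : (Fin r → ℝ) →ₗ[ℝ] (Fin r → ℝ))) :=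
      ⟨hinj, LinearMap.injective_iff_surjective.1 hinj⟩
    exact ⟨(LinearEquiv.ofBijective _ hbij).toContinuousLinearEquiv,
      ContinuousLinearMap.ext fun v => rfl⟩
  -- part 3
  have hpart3 : ∀ u : Fin r → ℝ, ∃ L : (Fin r → ℝ) ≃L[ℝ] (Fin r → ℝ),
      HasFDerivAt φ (L : (Fin r → ℝ) →L[ℝ] (Fin r → ℝ)) u := by
    intro u
    obtain ⟨L, hL⟩ := hDeq u
    exact ⟨L, by rw [hL]; exact hasFDerivAt_phi z Z u⟩
  -- maps to
  have hmaps : Set.MapsTo φ Set.univ C := by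
    intro u _
    exact ⟨fun i => Real.exp (∑ a, z i a * u a), fun i => Real.exp_pos _, rfl⟩
  -- injectivity
  have hinjOn : Set.InjOn φ Set.univ := by
    intro u _ v _ huv
    set d : Fin r → ℝ := fun a => u a - v a with hd
    choose m hmpos hmeq using fun i : Fin n =>
      exp_factor (∑ a, z i a * u a) (∑ a, z i a * v a)
    set c : Fin n → ℝ := fun i => m i * (∑ a, z i a * d a) with hcd
    have hdots : ∀ i, (∑ a, z i a * d a)
        = (∑ a, z i a * u a) - (∑ a, z i a * v a) := by
      intro i
      rw [← Finset.sum_sub_distrib]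
      exact Finset.sum_congr rfl fun a _ => by rw [hd]; ring
    have hdep : ∑ i, c i • Z i = 0 := by
      have h1 : ∀ i ∈ Finset.univ, c i • Z i
          = Real.exp (∑ a, z i a * u a) • Z i
            - Real.exp (∑ a, z i a * v a) • Z i := by
        intro i _
        have h3 : c i = Real.exp (∑ a, z i a * u a)
            - Real.exp (∑ a, z i a * v a) := by
          rw [hcd]; dsimp only; rw [hdots i, ← hmeq i]
        rw [h3, sub_smul]
      rw [Finset.sum_congr rfl h1, Finset.sum_sub_distrib]
      have h2 : (∑ i, Real.exp (∑ a, z i a * u a) • Z i) = φ u := rfl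
      have h4 : (∑ i, Real.exp (∑ a, z i a * v a) • Z i) = φ v := rfl
      rw [h2, h4, huv, sub_self]
    have hnn : ∀ i, 0 ≤ c i * (∑ a, z i a * d a) := by
      intro i
      have := hmpos i
      rw [hcd]; dsimp only
      nlinarith [sq_nonneg (∑ a, z i a * d a)]
    have hall := lemB z Z hZspan hsign c d hdep hnn
    have hz0 : ∀ i, (∑ a, z i a * d a) = 0 := by
      intro i
      have h0 := hall i
      rw [hcd] at h0; dsimp only at h0
      have hm := hmpos i
      rcases mul_eq_zero.1 h0 with h | h
      · rcases mul_eq_zero.1 h with h' | h'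
        · exact absurd h' (ne_of_gt hm)
        · exact h'
      · exact h
    have hd0 : d = 0 := span_dot z hzspan d hz0
    funext a
    have h5 : u a - v a = 0 := by
      have := congrFun hd0 a
      simpa [hd] using this
    linarith
  -- openness of range
  have hopen : IsOpen (Set.range φ) := by
    rw [isOpen_iff_mem_nhds]
    rintro _ ⟨u, rfl⟩
    obtain ⟨L, hL⟩ := hDeq u
    have hstrict : HasStrictFDerivAt φ (L : (Fin r → ℝ) →L[ℝ] (Fin r → ℝ)) u := by
      have h1 : HasStrictFDerivAt φ (fderiv ℝ φ u) u := hsmooth.hasStrictFDerivAt (by simp)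
      have h2 : fderiv ℝ φ u = Dphi z Z u := (hasFDerivAt_phi z Z u).fderiv
      rw [hL, ← h2]
      exact h1
    have hmap := hstrict.map_nhds_eq_of_equiv
    rw [← hmap, Filter.mem_map]
    have huniv : φ ⁻¹' (Set.range φ) = Set.univ :=
      Set.eq_univ_of_forall fun y => ⟨y, rfl⟩
    rw [huniv]
    exact Filter.univ_mem
  -- convexity of C
  have hCconv : Convex ℝ C := by
    intro w1 hw1 w2 hw2 t1 t2 ht1 ht2 hts
    obtain ⟨a1, ha1, rfl⟩ := hw1
    obtain ⟨a2, ha2, rfl⟩ := hw2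
    refine ⟨fun i => t1 * a1 i + t2 * a2 i, ?_, ?_⟩
    · intro i
      rcases eq_or_lt_of_le ht1 with h | h
      · have ht2' : t2 = 1 := by linarith
        have := ha2 i
        rw [← h, ht2']
        simpa using this
      · have h1 := mul_pos h (ha1 i)
        have h2 : 0 ≤ t2 * a2 i := mul_nonneg ht2 (ha2 i).le
        dsimp only
        linarith
    · rw [Finset.smul_sum, Finset.smul_sum, ← Finset.sum_add_distrib]
      exact Finset.sum_congr rfl fun i _ => by
        rw [smul_smul, smul_smul, ← add_smul]
  -- surjectivity
  have hsurj : Set.SurjOn φ Set.univ C := by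
    have hpre : IsPreconnected C := hCconv.isPreconnected
    have hIC : Set.range φ ⊆ C := by
      rintro _ ⟨u, rfl⟩
      exact hmaps (Set.mem_univ u)
    have hkey : ∀ y ∈ C, y ∈ closure (Set.range φ) → y ∈ Set.range φ := by
      intro y hy hyc
      exact closure_range z Z hzspan hZspan hpointed hsign y hy hyc
    have hsub : C ⊆ Set.range φ ∪ (closure (Set.range φ))ᶜ := by
      intro y hy
      by_cases h : y ∈ closure (Set.range φ)
      · exact Or.inl (hkey y hy h)
      · exact Or.inr h
    have hCI : (C ∩ Set.range φ).Nonempty :=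
      ⟨φ 0, hIC ⟨0, rfl⟩, ⟨0, rfl⟩⟩
    have hnc : ¬(C ∩ (closure (Set.range φ))ᶜ).Nonempty := by
      intro hne
      obtain ⟨y, hy1, hy2, hy3⟩ := hpre (Set.range φ) (closure (Set.range φ))ᶜ
        hopen isClosed_closure.isOpen_compl hsub hCI hne
      exact hy3 (subset_closure hy2)
    intro w hwC
    have hwcl : w ∈ closure (Set.range φ) := by
      by_contra h
      exact hnc ⟨w, hwC, h⟩
    have := hkey w hwC hwcl
    rw [Set.image_univ]
    exact this
  exact ⟨hsmooth, ⟨hmaps, hinjOn, hsurj⟩, hpart3⟩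
end

section
/- Let z_1,…,z_n and Z_1,…,Z_n be vectors in ℝ^r such that the z_i span ℝ^r and, for every r-tuple of indices, ⟨z_{i_1} ⋯ z_{i_r}⟩ and ⟨Z_{i_1} ⋯ Z_{i_r}⟩ have the same sign. Then for any positive scalars c_1,…,c_n > 0, the determinant of the matrix Σ_{i=1}^n c_i z_i Z_iᵀ is strictly positive. -/
/-!
Expanding `det (∑ i, c i • z i Z iᵀ)` multilinearly in its columns and averaging the expansion
over all reorderings of the columns gives the Cauchy–Binet-type identity
`r! · det (∑ i, c i • z i Z iᵀ) = ∑_{f : Fin r → Fin n} (∏ b, c (f b)) ⟨z_f⟩ ⟨Z_f⟩`.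
By the sign hypothesis every term is nonnegative, and the term indexed by a basis chosen among
the spanning vectors `z i` is positive.
-/

open Module

theorem Real.mul_pos_of_sign_eq {x y : ℝ} (h : sign x = sign y) (hx : x ≠ 0) : 0 < x * y := by
  have hy : y ≠ 0 := fun hy => hx (sign_eq_zero_iff.mp (h.trans (by rw [hy, sign_zero])))
  have hsq : sign x * sign y = 1 := by
    rw [← h]
    rcases sign_apply_eq_of_ne_zero x hx with h1 | h1 <;> rw [h1] <;> norm_num
  calc 0 < (sign x * x) * (sign y * y) :=
        mul_pos (sign_mul_pos_of_ne_zero x hx) (sign_mul_pos_of_ne_zero y hy)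
    _ = x * y := by linear_combination (x * y) * hsq

theorem Real.mul_nonneg_of_sign_eq {x y : ℝ} (h : sign x = sign y) : 0 ≤ x * y := by
  rcases eq_or_ne x 0 with rfl | hx
  · rw [zero_mul]
  · exact (mul_pos_of_sign_eq h hx).le

section

variable {R m ι : Type*} [CommRing R] [Fintype m] [DecidableEq m]

theorem Pi.basisFun_det_comp (v : ι → m → R) (f : m → ι) :
    (Pi.basisFun R m).det (v ∘ f) = (Matrix.of fun a b => v (f b) a).det := by
  rw [Basis.det_apply, Basis.coePiBasisFun.toMatrix_eq_transpose]
  rfl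

theorem Pi.basisFun_det_comp_eq_sum_perm (v : ι → m → R) (f : m → ι) :
    (Pi.basisFun R m).det (v ∘ f) =
      ∑ σ : Equiv.Perm m, Equiv.Perm.sign σ • ∏ b, v (f b) (σ b) := by
  rw [Pi.basisFun_det_comp, Matrix.det_apply]
  rfl

theorem exists_basisFun_det_comp_ne_zero {K : Type*} [Field K] {v : ι → m → K}
    (hv : Submodule.span K (Set.range v) = ⊤) :
    ∃ f : m → ι, (Pi.basisFun K m).det (v ∘ f) ≠ 0 := by
  let B := Basis.ofSpan hv.ge
  let B' := B.reindex (B.indexEquiv (Pi.basisFun K m))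
  have hB' : ∀ a, ∃ i, v i = B' a := fun a => Basis.ofSpan_subset hv.ge
    (B.range_reindex (B.indexEquiv (Pi.basisFun K m)) ▸ Set.mem_range_self a)
  choose f hf using hB'
  refine ⟨f, ?_⟩
  rw [show v ∘ f = B' from funext hf]
  exact ((Pi.basisFun K m).isUnit_det B').ne_zero

variable [Fintype ι]

/-- The matrix `∑ i, c i • v i (w i)ᵀ`. -/
def weightedOuterSum (c : ι → R) (v w : ι → m → R) : Matrix m m R :=
  Matrix.of fun a b => ∑ i, c i * v i a * w i b

theorem det_weightedOuterSum (c : ι → R) (v w : ι → m → R) :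
    (weightedOuterSum c v w).det =
      ∑ f : m → ι, (∏ b, c (f b) * w (f b) b) * (Pi.basisFun R m).det (v ∘ f) := by
  have hcols : weightedOuterSum c v w =
      (Pi.basisFun R m).toMatrix (fun b => ∑ i, (c i * w i b) • v i) := by
    ext a b
    simp [weightedOuterSum, Basis.toMatrix_apply, Finset.sum_apply, mul_right_comm]
  rw [hcols, ← Basis.det_apply]
  refine ((Pi.basisFun R m).det.toMultilinearMap.map_sum fun b i => (c i * w i b) • v i).trans
    (Finset.sum_congr rfl fun f _ => ?_)
  exact (Pi.basisFun R m).det.map_smul_univ (fun b => c (f b) * w (f b) b) (fun b => v (f b))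

theorem det_weightedOuterSum_eq_sum_perm (c : ι → R) (v w : ι → m → R) (σ : Equiv.Perm m) :
    (weightedOuterSum c v w).det =
      ∑ f : m → ι, (∏ b, c (f b)) *
        ((Pi.basisFun R m).det (v ∘ f) * (Equiv.Perm.sign σ • ∏ b, w (f b) (σ b))) := by
  rw [det_weightedOuterSum]
  symm
  refine Fintype.sum_equiv (σ.arrowCongr (Equiv.refl ι)) _ _ fun f => ?_
  have hprod : ∏ b, c (f (σ.symm b)) * w (f (σ.symm b)) b = ∏ b, c (f b) * w (f b) (σ b) := by
    rw [← Equiv.prod_comp σ]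
    simp
  have hdet : (Pi.basisFun R m).det (v ∘ f ∘ σ.symm) =
      Equiv.Perm.sign σ • (Pi.basisFun R m).det (v ∘ f) := by
    rw [← Function.comp_assoc, AlternatingMap.map_perm, Equiv.Perm.sign_symm]
  change _ = (∏ b, c (f (σ.symm b)) * w (f (σ.symm b)) b) *
    (Pi.basisFun R m).det (v ∘ f ∘ σ.symm)
  rw [hprod, hdet, Finset.prod_mul_distrib, mul_smul_comm, mul_smul_comm, mul_smul_comm]
  ring_nf

theorem factorial_mul_det_weightedOuterSum (c : ι → R) (v w : ι → m → R) :
    ((Fintype.card m).factorial : R) * (weightedOuterSum c v w).det =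
      ∑ f : m → ι, (∏ b, c (f b)) *
        ((Pi.basisFun R m).det (v ∘ f) * (Pi.basisFun R m).det (w ∘ f)) := by
  rw [← Fintype.card_perm, ← nsmul_eq_mul, ← Finset.card_univ, ← Finset.sum_const]
  simp_rw [Pi.basisFun_det_comp_eq_sum_perm w, Finset.mul_sum]
  rw [Finset.sum_comm]
  exact Finset.sum_congr rfl fun σ _ => det_weightedOuterSum_eq_sum_perm c v w σ

end

theorem det_weightedOuterSum_pos {m ι : Type*} [Fintype m] [DecidableEq m] [Fintype ι]
    {c : ι → ℝ} {v w : ι → m → ℝ} (hc : ∀ i, 0 < c i)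
    (hv : ∃ f : m → ι, (Pi.basisFun ℝ m).det (v ∘ f) ≠ 0)
    (hsign : ∀ f : m → ι,
      Real.sign ((Pi.basisFun ℝ m).det (v ∘ f)) = Real.sign ((Pi.basisFun ℝ m).det (w ∘ f))) :
    0 < (weightedOuterSum c v w).det := by
  obtain ⟨f₀, hf₀⟩ := hv
  have hsum : 0 < ((Fintype.card m).factorial : ℝ) * (weightedOuterSum c v w).det := by
    rw [factorial_mul_det_weightedOuterSum]
    refine Finset.sum_pos' (fun f _ => ?_) ⟨f₀, Finset.mem_univ _, ?_⟩
    · exact mul_nonneg (Finset.prod_nonneg fun b _ => (hc _).le)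
        (Real.mul_nonneg_of_sign_eq (hsign f))
    · exact mul_pos (Finset.prod_pos fun b _ => hc _) (Real.mul_pos_of_sign_eq (hsign f₀) hf₀)
  exact pos_of_mul_pos_right hsum (Nat.cast_nonneg _)

/-- **Positivity of the Jacobian.**
If `z` spans `ℝ^r` and all `r × r` determinants of `z` and `Z` have the same sign, then
for positive scalars `c i` the determinant of `∑ i, c i • z i Z iᵀ` is strictly positive. -/
theorem stmt_4 (r n : ℕ) (z Z : Fin n → Fin r → ℝ)
    (hzspan : Submodule.span ℝ (Set.range z) = ⊤)
    (hsign : ∀ f : Fin r → Fin n,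
      Real.sign (Matrix.det (Matrix.of fun a b => z (f b) a)) =
      Real.sign (Matrix.det (Matrix.of fun a b => Z (f b) a)))
    (c : Fin n → ℝ) (hc : ∀ i, 0 < c i) :
    0 < Matrix.det (Matrix.of fun a b : Fin r => ∑ i, c i * z i a * Z i b) := by
  refine det_weightedOuterSum_pos hc (exists_basisFun_det_comp_ne_zero hzspan) fun f => ?_
  simpa only [Pi.basisFun_det_comp] using hsign f
end

section
/- Let m ≥ 0, let W_1,…,W_{m+1} be a basis of ℝ^{m+1} with ⟨W_1 ⋯ W_{m+1}⟩ > 0, and let Y ∈ ℝ^{m+1} satisfy Y·W_i > 0 for all i = 1,…,m+1. Then the function W ↦ e^{−W·Y} is integrable over the cone C = {Σ_{i=1}^{m+1} α_i W_i : α_i ≥ 0} with respect to Lebesgue measure on ℝ^{m+1}, and ∫_C e^{−W·Y} dW = ⟨W_1 ⋯ W_{m+1}⟩ / ((Y·W_1)(Y·W_2) ⋯ (Y·W_{m+1})). -/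
open scoped BigOperators
open MeasureTheory Set Filter Topology

lemma exp_neg_mul_integral_Ioi {b : ℝ} (hb : 0 < b) :
    ∫ x in Set.Ioi (0:ℝ), Real.exp (-(b * x)) = 1 / b := by
  have hderiv : ∀ x ∈ Ioi (0:ℝ),
      HasDerivAt (fun x : ℝ => -Real.exp (-(b * x)) / b) (Real.exp (-(b * x))) x := by
    intro x _
    have h1 : HasDerivAt (fun x : ℝ => -(b * x)) (-b) x := by
      have h := ((hasDerivAt_id x).const_mul b).neg
      simp only [id_eq, mul_one] at h
      exact h
    have h2 : HasDerivAt (fun x : ℝ => -Real.exp (-(b * x)) / b) (-(Real.exp (-(b * x)) * -b) / b) x :=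
      (h1.exp).neg.div_const b
    convert h2 using 1
    field_simp
  have hcont : ContinuousWithinAt (fun x : ℝ => -Real.exp (-(b * x)) / b) (Ici 0) 0 :=
    (Continuous.div_const (by continuity) b).continuousWithinAt
  have hint : IntegrableOn (fun x : ℝ => Real.exp (-(b * x))) (Ioi 0) := by
    simpa [neg_mul] using exp_neg_integrableOn_Ioi 0 hb
  have htend : Tendsto (fun x : ℝ => -Real.exp (-(b * x)) / b) atTop (𝓝 0) := by
    have : Tendsto (fun x : ℝ => Real.exp (-(b * x))) atTop (𝓝 0) :=
      Real.tendsto_exp_neg_atTop_nhds_zero.comp (Tendsto.const_mul_atTop hb tendsto_id)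
    simpa using this.neg.div_const b
  rw [integral_Ioi_of_hasDerivAt_of_tendsto hcont hderiv hint htend]
  simp [neg_div]

/-- **Laplace transform over a simplicial cone.**
Let `W₁, …, W_{m+1}` be a basis of `ℝ^{m+1}` with `⟨W₁ ⋯ W_{m+1}⟩ > 0` and let `Y`
satisfy `Y · W i > 0` for all `i`. Then `W ↦ e^{-W·Y}` is integrable over the cone
spanned by the `W i` and the integral equals
`⟨W₁ ⋯ W_{m+1}⟩ / ((Y·W₁) ⋯ (Y·W_{m+1}))`. -/
theorem stmt_8 (m : ℕ) (W : Fin (m + 1) → Fin (m + 1) → ℝ) (Y : Fin (m + 1) → ℝ)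
    (hdet : 0 < Matrix.det (Matrix.of fun a b => W b a))
    (hYW : ∀ i, 0 < ∑ a, Y a * W i a) :
    IntegrableOn (fun w : Fin (m + 1) → ℝ => Real.exp (-(∑ a, w a * Y a)))
      {w : Fin (m + 1) → ℝ |
        ∃ α : Fin (m + 1) → ℝ, (∀ i, 0 ≤ α i) ∧ w = ∑ i, α i • W i} ∧
    ∫ w in {w : Fin (m + 1) → ℝ |
        ∃ α : Fin (m + 1) → ℝ, (∀ i, 0 ≤ α i) ∧ w = ∑ i, α i • W i},
        Real.exp (-(∑ a, w a * Y a)) =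
      Matrix.det (Matrix.of fun a b => W b a) / ∏ i, (∑ a, Y a * W i a) := by
  set M : Matrix (Fin (m+1)) (Fin (m+1)) ℝ := Matrix.of fun a b => W b a with hM
  set c : Fin (m+1) → ℝ := fun i => ∑ a, Y a * W i a with hc
  set T : (Fin (m+1) → ℝ) →L[ℝ] (Fin (m+1) → ℝ) :=
    LinearMap.toContinuousLinearMap (Matrix.toLin' M) with hT
  have hTapp : ∀ α : Fin (m+1) → ℝ, T α = ∑ i, α i • W i := by
    intro α
    funext a
    simp only [hT, LinearMap.coe_toContinuousLinearMap', Matrix.toLin'_apply, Matrix.mulVec,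
      dotProduct, hM, Matrix.of_apply, Finset.sum_apply, Pi.smul_apply, smul_eq_mul]
    exact Finset.sum_congr rfl fun i _ => mul_comm _ _
  set s : Set (Fin (m+1) → ℝ) := Set.univ.pi fun _ => Ici (0:ℝ) with hs'
  have hs : MeasurableSet s := MeasurableSet.univ_pi fun _ => measurableSet_Ici
  have himg : {w : Fin (m + 1) → ℝ |
      ∃ α : Fin (m + 1) → ℝ, (∀ i, 0 ≤ α i) ∧ w = ∑ i, α i • W i} = T '' s := by
    ext w
    constructor
    · rintro ⟨α, hα, rfl⟩
      exact ⟨α, fun i _ => hα i, hTapp α⟩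
    · rintro ⟨α, hα, rfl⟩
      exact ⟨α, fun i => hα i (Set.mem_univ i), (hTapp α)⟩
  have hinj : Function.Injective T := by
    rw [hT]
    simp only [LinearMap.coe_toContinuousLinearMap']
    have : Function.Injective (Matrix.toLin' M) := by
      have hM' : IsUnit M.det := (isUnit_iff_ne_zero.2 hdet.ne')
      have := Matrix.mulVec_injective_iff_isUnit.2 ((Matrix.isUnit_iff_isUnit_det M).2 hM')
      intro x y hxy
      exact this (by simpa [Matrix.toLin'_apply] using hxy)
    exact this
  have hfd : ∀ x ∈ s, HasFDerivWithinAt T T s x :=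
    fun x _ => T.hasFDerivAt.hasFDerivWithinAt
  have hdetT : T.det = M.det := by
    rw [hT]
    simp [ContinuousLinearMap.det, LinearMap.det_toLin']
  have hsum : ∀ α : Fin (m+1) → ℝ, (∑ a, (T α) a * Y a) = ∑ i, c i * α i := by
    intro α
    rw [hTapp]
    calc ∑ a, (∑ i, α i • W i) a * Y a
        = ∑ a, ∑ i, α i * W i a * Y a := by
          simp [Finset.sum_apply, Finset.sum_mul]
      _ = ∑ i, ∑ a, α i * W i a * Y a := Finset.sum_comm
      _ = ∑ i, c i * α i := by
          refine Finset.sum_congr rfl fun i _ => ?_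
          rw [hc]
          simp only [Finset.sum_mul, Finset.mul_sum]
          exact Finset.sum_congr rfl fun a _ => by ring
  -- integrability on s of the transformed integrand
  have hint1 : ∀ i : Fin (m+1), Integrable ((Ici (0:ℝ)).indicator
      fun x => Real.exp (-(c i * x))) := by
    intro i
    rw [integrable_indicator_iff measurableSet_Ici]
    rw [IntegrableOn, ← restrict_Ioi_eq_restrict_Ici]
    have := exp_neg_integrableOn_Ioi 0 (hYW i)
    simp only [neg_mul] at this
    exact this
  have hindic : (s.indicator fun α : Fin (m+1) → ℝ => Real.exp (-(∑ a, (T α) a * Y a)))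
      = fun α => ∏ i, (Ici (0:ℝ)).indicator (fun x => Real.exp (-(c i * x))) (α i) := by
    funext α
    by_cases hα : α ∈ s
    · rw [Set.indicator_of_mem hα, hsum]
      have heach : ∀ i ∈ Finset.univ, (Ici (0:ℝ)).indicator
          (fun x => Real.exp (-(c i * x))) (α i) = Real.exp (-(c i * α i)) :=
        fun i _ => Set.indicator_of_mem (hα i (Set.mem_univ i)) _
      rw [Finset.prod_congr rfl heach, ← Real.exp_sum]
      congr 1
      rw [← Finset.sum_neg_distrib]
    · rw [Set.indicator_of_notMem hα]
      rw [hs', Set.mem_pi] at hα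
      push_neg at hα
      obtain ⟨i, -, hi⟩ := hα
      exact (Finset.prod_eq_zero (Finset.mem_univ i)
        (Set.indicator_of_notMem hi _)).symm
  have hprodint : Integrable (fun α : Fin (m+1) → ℝ =>
      ∏ i, (Ici (0:ℝ)).indicator (fun x => Real.exp (-(c i * x))) (α i)) :=
    Integrable.fintype_prod hint1
  have hIs : IntegrableOn (fun α : Fin (m+1) → ℝ =>
      Real.exp (-(∑ a, (T α) a * Y a))) s := by
    have h2 := hprodint
    rw [← hindic] at h2
    exact (integrable_indicator_iff hs).1 h2
  have hiff := integrableOn_image_iff_integrableOn_abs_det_fderiv_smul volume hs hfd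
    hinj.injOn (fun w => Real.exp (-(∑ a, w a * Y a)))
  have hintC : IntegrableOn (fun w : Fin (m + 1) → ℝ => Real.exp (-(∑ a, w a * Y a)))
      {w : Fin (m + 1) → ℝ |
        ∃ α : Fin (m + 1) → ℝ, (∀ i, 0 ≤ α i) ∧ w = ∑ i, α i • W i} := by
    rw [himg, hiff]
    have h := hIs.const_mul |T.det|
    simp only [smul_eq_mul]
    exact h
  refine ⟨hintC, ?_⟩
  rw [himg, integral_image_eq_integral_abs_det_fderiv_smul volume hs hfd hinj.injOn]
  have hval : ∫ α in s, Real.exp (-(∑ a, (T α) a * Y a)) = ∏ i, (1 / c i) := by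
    rw [← integral_indicator hs, hindic, volume_pi]
    beta_reduce
    rw [integral_fintype_prod_eq_prod (fun i (x : ℝ) =>
        (Ici (0:ℝ)).indicator (fun x => Real.exp (-(c i * x))) x)]
    refine Finset.prod_congr rfl fun i _ => ?_
    rw [integral_indicator measurableSet_Ici, ← restrict_Ioi_eq_restrict_Ici]
    exact exp_neg_mul_integral_Ioi (hYW i)
  calc ∫ α in s, |T.det| • Real.exp (-(∑ a, (T α) a * Y a))
      = |T.det| * ∫ α in s, Real.exp (-(∑ a, (T α) a * Y a)) := by
        rw [integral_smul, smul_eq_mul]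
    _ = M.det / ∏ i, c i := by
        rw [hval, hdetT, abs_of_pos hdet]
        rw [Finset.prod_div_distrib]
        simp [Finset.prod_const_one, div_eq_mul_inv, one_div]
end

section
/- Let Y_0, Y_1, Y_2 be positive real numbers. Then the function W = (W_0,W_1,W_2) ↦ e^{−(W_0 Y_0 + W_1 Y_1 + W_2 Y_2)} is integrable over the cone {W ∈ ℝ^3 : W_0 ≥ 0, W_1 ≥ 0, W_2 ≥ 0, W_0 + W_1 ≥ W_2} with respect to Lebesgue measure, and the integral equals (Y_0 + Y_1 + Y_2) / ((Y_0 + Y_2)(Y_1 + Y_2) Y_0 Y_1). -/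
/-!
Slice the cone along `W₂`: for fixed `(W₀, W₁)` in the quadrant, `W₂` ranges over
`[0, W₀ + W₁]`, and integrating `e^{-W₂Y₂}` over it gives
`(e^{-(W₀Y₀ + W₁Y₁)} - e^{-(W₀(Y₀ + Y₂) + W₁(Y₁ + Y₂))}) / Y₂`. Both terms are Laplace transforms of
the quadrant, equal to `1/(Y₀Y₁)` and `1/((Y₀ + Y₂)(Y₁ + Y₂))`, and their difference divided by
`Y₂` is the claimed rational function.
-/

open MeasureTheory Set Real

theorem integrableOn_exp_neg_mul_Ici {c : ℝ} (hc : 0 < c) :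
    IntegrableOn (fun x : ℝ => exp (-(x * c))) (Ici 0) := by
  rw [integrableOn_Ici_iff_integrableOn_Ioi]
  simpa [mul_comm] using integrableOn_exp_mul_Ioi (neg_lt_zero.2 hc) 0

theorem integral_exp_neg_mul_Ici {c : ℝ} (hc : 0 < c) :
    ∫ x in Ici 0, exp (-(x * c)) = c⁻¹ := by
  rw [integral_Ici_eq_integral_Ioi]
  simpa [mul_comm] using integral_exp_mul_Ioi (neg_lt_zero.2 hc) 0

theorem integral_exp_neg_mul_Icc {c b : ℝ} (hc : c ≠ 0) (hb : 0 ≤ b) :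
    ∫ x in Icc 0 b, exp (-(x * c)) = (1 - exp (-(b * c))) / c := by
  rw [integral_Icc_eq_integral_Ioc, ← intervalIntegral.integral_of_le hb,
    intervalIntegral.integral_comp_mul_right (fun y => exp (-y)) hc]
  simp [div_eq_inv_mul]

section Orthant

variable {ι : Type*} [Fintype ι] {Y : ι → ℝ}

theorem exp_neg_sum_mul_eq_prod (W : ι → ℝ) :
    exp (-∑ i, W i * Y i) = ∏ i, exp (-(W i * Y i)) := by
  rw [← Finset.sum_neg_distrib, exp_sum]

theorem volume_restrict_Ici_zero_eq_pi :
    volume.restrict (Ici (0 : ι → ℝ)) = Measure.pi fun _ => volume.restrict (Ici 0) := by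
  rw [← pi_univ_Ici, volume_pi, Measure.restrict_pi_pi]
  rfl

theorem integrableOn_exp_neg_sum_mul_Ici_zero (hY : ∀ i, 0 < Y i) :
    IntegrableOn (fun W : ι → ℝ => exp (-∑ i, W i * Y i)) (Ici 0) := by
  simp_rw [exp_neg_sum_mul_eq_prod, IntegrableOn, volume_restrict_Ici_zero_eq_pi]
  exact Integrable.fintype_prod fun i => integrableOn_exp_neg_mul_Ici (hY i)

theorem integral_exp_neg_sum_mul_Ici_zero (hY : ∀ i, 0 < Y i) :
    ∫ W in Ici (0 : ι → ℝ), exp (-∑ i, W i * Y i) = ∏ i, (Y i)⁻¹ := by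
  simp_rw [exp_neg_sum_mul_eq_prod, volume_restrict_Ici_zero_eq_pi]
  rw [integral_fintype_prod_eq_prod fun i x => exp (-(x * Y i))]
  simp_rw [integral_exp_neg_mul_Ici (hY _)]

end Orthant

theorem setIntegral_prod_symm_of_fibers {α β E : Type*} [MeasurableSpace α] [MeasurableSpace β]
    {μ : Measure α} {ν : Measure β} [SFinite μ] [SFinite ν]
    [NormedAddCommGroup E] [NormedSpace ℝ E] {f : α × β → E} {s : Set β} {t : β → Set α}
    (hs : MeasurableSet s) (hst : MeasurableSet {z : α × β | z.2 ∈ s ∧ z.1 ∈ t z.2})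
    (hf : IntegrableOn f {z : α × β | z.2 ∈ s ∧ z.1 ∈ t z.2} (μ.prod ν)) :
    ∫ z in {z : α × β | z.2 ∈ s ∧ z.1 ∈ t z.2}, f z ∂(μ.prod ν) =
      ∫ y in s, ∫ x in t y, f (x, y) ∂μ ∂ν := by
  rw [← integral_indicator hst, integral_prod_symm _ ((integrable_indicator_iff hst).2 hf),
    ← integral_indicator hs]
  congr 1 with y
  by_cases hy : y ∈ s
  · have hfiber : t y = (fun x => (x, y)) ⁻¹' {z : α × β | z.2 ∈ s ∧ z.1 ∈ t z.2} := by
      ext x; simp [hy]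
    rw [indicator_of_mem hy, hfiber, ← integral_indicator (measurable_prodMk_right hst)]
    rfl
  · simp [hy]

section Quadrant

variable {a b : ℝ}

theorem exp_neg_sum_mul_fin_two (p : Fin 2 → ℝ) :
    exp (-∑ i, p i * ![a, b] i) = exp (-(p 0 * a + p 1 * b)) := by
  simp [Fin.sum_univ_two]

theorem integrableOn_exp_neg_mul_quadrant (ha : 0 < a) (hb : 0 < b) :
    IntegrableOn (fun p : Fin 2 → ℝ => exp (-(p 0 * a + p 1 * b))) (Ici 0) := by
  simpa only [exp_neg_sum_mul_fin_two] using
    integrableOn_exp_neg_sum_mul_Ici_zero (Y := ![a, b]) (Fin.forall_fin_two.2 ⟨ha, hb⟩)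

theorem integral_exp_neg_mul_quadrant (ha : 0 < a) (hb : 0 < b) :
    ∫ p in Ici (0 : Fin 2 → ℝ), exp (-(p 0 * a + p 1 * b)) = (a * b)⁻¹ := by
  simpa only [exp_neg_sum_mul_fin_two, Fin.prod_univ_two, Matrix.cons_val_zero,
    Matrix.cons_val_one, Matrix.head_cons, mul_inv] using
    integral_exp_neg_sum_mul_Ici_zero (Y := ![a, b]) (Fin.forall_fin_two.2 ⟨ha, hb⟩)

end Quadrant

def quadCone : Set (Fin 3 → ℝ) := {W | 0 ≤ W 0 ∧ 0 ≤ W 1 ∧ 0 ≤ W 2 ∧ W 2 ≤ W 0 + W 1}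

theorem measurableSet_quadCone : MeasurableSet quadCone := by
  unfold quadCone; measurability

theorem quadCone_subset_Ici : quadCone ⊆ Ici 0 :=
  fun _ ⟨hW₀, hW₁, hW₂, _⟩ i => by fin_cases i <;> assumption

theorem setIntegral_quadCone_eq_integral_integral {E : Type*} [NormedAddCommGroup E]
    [NormedSpace ℝ E] {F : (Fin 3 → ℝ) → E} (hF : IntegrableOn F quadCone) :
    ∫ W in quadCone, F W =
      ∫ p in Ici (0 : Fin 2 → ℝ), ∫ t in Icc 0 (p 0 + p 1), F ![p 0, p 1, t] := by
  let e := MeasurableEquiv.piFinSuccAbove (fun _ : Fin 3 => ℝ) 2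
  have he : MeasurePreserving e.symm (volume.prod volume) volume :=
    (volume_preserving_piFinSuccAbove _ 2).symm
  have he_apply (z : ℝ × (Fin 2 → ℝ)) : e.symm z = ![z.2 0, z.2 1, z.1] := by
    ext i; fin_cases i <;> rfl
  have hpre : e.symm ⁻¹' quadCone = {z | z.2 ∈ Ici 0 ∧ z.1 ∈ Icc 0 (z.2 0 + z.2 1)} := by
    ext z
    simp [quadCone, he_apply, Pi.le_def, Fin.forall_fin_two]
    tauto
  have hmeas := e.symm.measurable measurableSet_quadCone
  have hF' := (he.integrableOn_comp_preimage e.symm.measurableEmbedding).2 hF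
  rw [hpre] at hmeas hF'
  have hfubini := setIntegral_prod_symm_of_fibers (t := fun p : Fin 2 → ℝ => Icc 0 (p 0 + p 1))
    measurableSet_Ici hmeas hF'
  rw [← he.setIntegral_preimage_emb e.symm.measurableEmbedding, hpre]
  simpa only [Function.comp_apply, he_apply] using hfubini

variable {Y₀ Y₁ Y₂ : ℝ}

theorem integral_exp_neg_mul_Icc_add (h₂ : 0 < Y₂) {p : Fin 2 → ℝ} (hp : 0 ≤ p) :
    ∫ t in Icc 0 (p 0 + p 1), exp (-(p 0 * Y₀ + p 1 * Y₁ + t * Y₂)) =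
      Y₂⁻¹ * (exp (-(p 0 * Y₀ + p 1 * Y₁)) - exp (-(p 0 * (Y₀ + Y₂) + p 1 * (Y₁ + Y₂)))) := by
  have hsplit : ∀ t, exp (-(p 0 * Y₀ + p 1 * Y₁ + t * Y₂)) =
      exp (-(p 0 * Y₀ + p 1 * Y₁)) * exp (-(t * Y₂)) := fun t => by
    rw [← exp_add]; ring_nf
  have hmerge : exp (-(p 0 * Y₀ + p 1 * Y₁)) * exp (-((p 0 + p 1) * Y₂)) =
      exp (-(p 0 * (Y₀ + Y₂) + p 1 * (Y₁ + Y₂))) := by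
    rw [← exp_add]; ring_nf
  simp_rw [hsplit]
  rw [integral_const_mul, integral_exp_neg_mul_Icc h₂.ne' (add_nonneg (hp 0) (hp 1)), ← hmerge]
  ring

theorem integral_quadrant_integral_Icc_exp_neg (h₀ : 0 < Y₀) (h₁ : 0 < Y₁) (h₂ : 0 < Y₂) :
    ∫ p in Ici (0 : Fin 2 → ℝ), ∫ t in Icc 0 (p 0 + p 1),
        exp (-(p 0 * Y₀ + p 1 * Y₁ + t * Y₂)) =
      (Y₀ + Y₁ + Y₂) / ((Y₀ + Y₂) * (Y₁ + Y₂) * Y₀ * Y₁) := by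
  rw [setIntegral_congr_fun measurableSet_Ici fun p hp => integral_exp_neg_mul_Icc_add h₂ hp,
    integral_const_mul, integral_sub (integrableOn_exp_neg_mul_quadrant h₀ h₁)
      (integrableOn_exp_neg_mul_quadrant (add_pos h₀ h₂) (add_pos h₁ h₂)),
    integral_exp_neg_mul_quadrant h₀ h₁,
    integral_exp_neg_mul_quadrant (add_pos h₀ h₂) (add_pos h₁ h₂)]
  field_simp
  ring

/-- **Laplace transform over the dual cone of a quadrilateral.**
For positive reals `Y₀, Y₁, Y₂`, the function `W ↦ e^{-(W₀Y₀ + W₁Y₁ + W₂Y₂)}` is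
integrable over the cone `{W ∈ ℝ³ : W₀, W₁, W₂ ≥ 0, W₀ + W₁ ≥ W₂}` and the integral
equals `(Y₀ + Y₁ + Y₂)/((Y₀ + Y₂)(Y₁ + Y₂) Y₀ Y₁)`. -/
theorem stmt_9 (Y₀ Y₁ Y₂ : ℝ) (h₀ : 0 < Y₀) (h₁ : 0 < Y₁) (h₂ : 0 < Y₂) :
    IntegrableOn
      (fun W : Fin 3 → ℝ => Real.exp (-(W 0 * Y₀ + W 1 * Y₁ + W 2 * Y₂)))
      {W : Fin 3 → ℝ | 0 ≤ W 0 ∧ 0 ≤ W 1 ∧ 0 ≤ W 2 ∧ W 2 ≤ W 0 + W 1} ∧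
    ∫ W in {W : Fin 3 → ℝ | 0 ≤ W 0 ∧ 0 ≤ W 1 ∧ 0 ≤ W 2 ∧ W 2 ≤ W 0 + W 1},
        Real.exp (-(W 0 * Y₀ + W 1 * Y₁ + W 2 * Y₂)) =
      (Y₀ + Y₁ + Y₂) / ((Y₀ + Y₂) * (Y₁ + Y₂) * Y₀ * Y₁) := by
  have hint : IntegrableOn (fun W : Fin 3 → ℝ => exp (-(W 0 * Y₀ + W 1 * Y₁ + W 2 * Y₂)))
      quadCone := by
    simpa [Fin.sum_univ_three] using (integrableOn_exp_neg_sum_mul_Ici_zero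
      (Y := ![Y₀, Y₁, Y₂]) (by simp [Fin.forall_fin_succ, h₀, h₁, h₂])).mono_set
      quadCone_subset_Ici
  refine ⟨hint, (setIntegral_quadCone_eq_integral_integral hint).trans ?_⟩
  simpa using integral_quadrant_integral_Icc_exp_neg h₀ h₁ h₂
end

section
/- Let x be a real number with |x| < 1. Then ∫_0^{2π} ∫_0^1 r (1 + r x cos θ)^{−3} dr dθ = π (1 − x^2)^{−3/2}. -/
/-!
The inner integral is elementary: `r² / (2 (1 + r a)²)` is an antiderivative of `r / (1 + r a)³`,
so it equals `1 / (2 (1 + x cos θ)²)`. With `c = √(1 - x²)`,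
`d/dθ [x sin θ / (1 + x cos θ)] = 1 / (1 + x cos θ) - c² / (1 + x cos θ)²` and the bracket is
`2π`-periodic, so the outer integral is `c⁻² / 2` times `∫₀^{2π} dθ / (1 + x cos θ) = 2π / c`.
The latter follows from the antiderivative `θ - 2 arctan (x sin θ / (1 + c + x cos θ))` of
`c / (1 + x cos θ)`, which, unlike the half-angle substitution through `tan (θ / 2)`, is smooth on
all of `ℝ`.
-/

open Real MeasureTheory

lemma integral_div_one_add_mul_pow_three {a : ℝ} (ha : -1 < a) :
    ∫ r in (0 : ℝ)..1, r / (1 + r * a) ^ 3 = ((1 + a) ^ 2)⁻¹ / 2 := by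
  have hpos : ∀ r ∈ Set.uIcc (0 : ℝ) 1, 0 < 1 + r * a := by
    intro r hr
    rw [Set.uIcc_of_le zero_le_one] at hr
    rcases le_or_gt 0 a with h | h
    · nlinarith [mul_nonneg hr.1 h]
    · nlinarith [mul_le_mul_of_nonpos_right hr.2 h.le]
  have hderiv : ∀ r ∈ Set.uIcc (0 : ℝ) 1,
      HasDerivAt (fun r => r ^ 2 * ((1 + r * a) ^ 2)⁻¹ / 2) (r / (1 + r * a) ^ 3) r := by
    intro r hr
    have hne := (hpos r hr).ne'
    refine (((hasDerivAt_pow 2 r).mul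
      ((((hasDerivAt_id' r).mul_const a).const_add 1).fun_pow 2 |>.fun_inv (by positivity))).div_const
      2).congr_deriv ?_
    field_simp
    ring
  have hint : IntervalIntegrable (fun r => r / (1 + r * a) ^ 3) volume 0 1 :=
    (continuousOn_id.div (by fun_prop) fun r hr => pow_ne_zero _ (hpos r hr).ne').intervalIntegrable
  rw [intervalIntegral.integral_eq_sub_of_hasDerivAt hderiv hint]
  simp

lemma neg_one_lt_mul_cos {x : ℝ} (hx : |x| < 1) (θ : ℝ) : -1 < x * cos θ := by
  have : |x * cos θ| < 1 :=
    (abs_mul x (cos θ)).trans_lt (mul_lt_one_of_nonneg_of_lt_one_left (abs_nonneg x) hx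
      (abs_cos_le_one θ))
  exact (abs_lt.mp this).1

lemma hasDerivAt_sub_two_arctan {x : ℝ} (hx : |x| < 1) (θ : ℝ) :
    HasDerivAt (fun θ => θ - 2 * arctan (x * sin θ / (1 + √(1 - x ^ 2) + x * cos θ)))
      (√(1 - x ^ 2) / (1 + x * cos θ)) θ := by
  set c := √(1 - x ^ 2)
  have hc0 : 0 ≤ c := sqrt_nonneg _
  have hc2 : c ^ 2 = 1 - x ^ 2 := sq_sqrt (sub_nonneg.2 ((sq_le_one_iff_abs_le_one x).2 hx.le))
  have hD : 0 < 1 + x * cos θ := by linarith [neg_one_lt_mul_cos hx θ]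
  have hE : 0 < 1 + c + x * cos θ := by linarith
  have hu := ((hasDerivAt_sin θ).const_mul x).fun_div
    (((hasDerivAt_cos θ).const_mul x).const_add (1 + c)) hE.ne'
  refine ((hasDerivAt_id' θ).sub (hu.arctan.const_mul 2)).congr_deriv ?_
  have hsq : 1 + (x * sin θ / (1 + c + x * cos θ)) ^ 2
      = 2 * (1 + c) * (1 + x * cos θ) / (1 + c + x * cos θ) ^ 2 := by
    field_simp
    linear_combination x ^ 2 * sin_sq_add_cos_sq θ + hc2
  have hnum : x * cos θ * (1 + c + x * cos θ) - x * sin θ * (x * -sin θ)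
      = (1 + c) * (x * cos θ + 1 - c) := by
    linear_combination x ^ 2 * sin_sq_add_cos_sq θ + hc2
  rw [hsq, hnum]
  field_simp
  ring

lemma integral_inv_one_add_mul_cos {x : ℝ} (hx : |x| < 1) :
    ∫ θ in (0 : ℝ)..(2 * π), (1 + x * cos θ)⁻¹ = 2 * π / √(1 - x ^ 2) := by
  have hc : 0 < √(1 - x ^ 2) := sqrt_pos.2 (sub_pos.2 ((sq_lt_one_iff_abs_lt_one x).2 hx))
  have hcont : Continuous fun θ => (1 + x * cos θ)⁻¹ :=
    (by fun_prop : Continuous fun θ => 1 + x * cos θ).inv₀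
      fun θ => by linarith [neg_one_lt_mul_cos hx θ]
  have hFTC := intervalIntegral.integral_eq_sub_of_hasDerivAt
    (fun θ _ => hasDerivAt_sub_two_arctan hx θ)
    (by simpa only [div_eq_mul_inv] using (hcont.const_mul √(1 - x ^ 2)).intervalIntegrable 0 (2 * π))
  simp only [div_eq_mul_inv, intervalIntegral.integral_const_mul, sin_two_pi, mul_zero, cos_two_pi,
    mul_one, zero_mul, arctan_zero, sub_zero, sin_zero, cos_zero, sub_self] at hFTC
  rw [eq_div_iff hc.ne']
  linarith

lemma integral_inv_one_add_mul_cos_sq {x : ℝ} (hx : |x| < 1) :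
    ∫ θ in (0 : ℝ)..(2 * π), ((1 + x * cos θ) ^ 2)⁻¹ = 2 * π / √(1 - x ^ 2) ^ 3 := by
  have hD : ∀ θ, 1 + x * cos θ ≠ 0 := fun θ => by linarith [neg_one_lt_mul_cos hx θ]
  have hcont : Continuous fun θ => 1 + x * cos θ := by fun_prop
  have hderiv : ∀ θ, HasDerivAt (fun θ => x * sin θ / (1 + x * cos θ))
      ((1 + x * cos θ)⁻¹ - (1 - x ^ 2) * ((1 + x * cos θ) ^ 2)⁻¹) θ := fun θ => by
    refine (((hasDerivAt_sin θ).const_mul x).fun_div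
      (((hasDerivAt_cos θ).const_mul x).const_add 1) (hD θ)).congr_deriv ?_
    have := hD θ
    field_simp
    linear_combination x ^ 2 * sin_sq_add_cos_sq θ
  have hint₁ : IntervalIntegrable (fun θ => (1 + x * cos θ)⁻¹) volume 0 (2 * π) :=
    (hcont.inv₀ hD).intervalIntegrable _ _
  have hint₂ : IntervalIntegrable (fun θ => ((1 + x * cos θ) ^ 2)⁻¹) volume 0 (2 * π) :=
    ((hcont.pow 2).inv₀ fun θ => pow_ne_zero 2 (hD θ)).intervalIntegrable _ _
  have hFTC := intervalIntegral.integral_eq_sub_of_hasDerivAt (fun θ _ => hderiv θ)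
    (hint₁.sub (hint₂.const_mul (1 - x ^ 2)))
  rw [intervalIntegral.integral_sub hint₁ (hint₂.const_mul _), intervalIntegral.integral_const_mul,
    integral_inv_one_add_mul_cos hx] at hFTC
  simp only [sin_two_pi, mul_zero, cos_two_pi, mul_one, zero_div, sin_zero, cos_zero, sub_self]
    at hFTC
  have hc : 0 < √(1 - x ^ 2) := sqrt_pos.2 (sub_pos.2 ((sq_lt_one_iff_abs_lt_one x).2 hx))
  have hc2 : √(1 - x ^ 2) ^ 2 = 1 - x ^ 2 := sq_sqrt (sub_nonneg.2 ((sq_le_one_iff_abs_le_one x).2 hx.le))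
  rw [sub_eq_zero, eq_comm, eq_div_iff hc.ne'] at hFTC
  rw [eq_div_iff (by positivity), show √(1 - x ^ 2) ^ 3 = √(1 - x ^ 2) ^ 2 * √(1 - x ^ 2) by ring,
    hc2]
  linear_combination hFTC

/-- **Volume of the dual of the unit disk.**
For `|x| < 1`,
`∫₀^{2π} ∫₀^1 r (1 + r x cos θ)⁻³ dr dθ = π (1 - x²)^{-3/2}`. -/
theorem stmt_10 (x : ℝ) (hx : |x| < 1) :
    ∫ θ in (0 : ℝ)..(2 * Real.pi), ∫ r in (0 : ℝ)..1,
        r / (1 + r * x * Real.cos θ) ^ 3 =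
      Real.pi / (1 - x ^ 2) ^ ((3 : ℝ) / 2) := by
  have hinner : ∀ θ, ∫ r in (0 : ℝ)..1, r / (1 + r * x * cos θ) ^ 3
      = ((1 + x * cos θ) ^ 2)⁻¹ / 2 := fun θ => by
    simpa only [mul_assoc] using integral_div_one_add_mul_pow_three (neg_one_lt_mul_cos hx θ)
  have h1x : 0 ≤ 1 - x ^ 2 := sub_nonneg.2 ((sq_le_one_iff_abs_le_one x).2 hx.le)
  rw [intervalIntegral.integral_congr fun θ _ => hinner θ, intervalIntegral.integral_div,
    integral_inv_one_add_mul_cos_sq hx, rpow_div_two_eq_sqrt _ h1x]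
  norm_cast
  ring
end

section
/- Let θ_1, θ, θ_2 be real numbers with sin(θ − θ_1) ≠ 0 and sin(θ_2 − θ) ≠ 0. Then the family n ↦ (θ_2 − θ_1)/((θ_2 − θ − 2πn)(θ + 2πn − θ_1)), indexed by n ∈ ℤ, is summable (all denominators are nonzero), and Σ_{n∈ℤ} (θ_2 − θ_1)/((θ_2 − θ − 2πn)(θ + 2πn − θ_1)) = (sin(θ_2 − θ_1) + sin(θ − θ_1) + sin(θ_2 − θ)) / (2 sin(θ − θ_1) sin(θ_2 − θ)). -/
/-!
Each term splits as `1 / (a - 2πn) + 1 / (b + 2πn)` with `a = θ₂ - θ`, `b = θ - θ₁`. Summed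
symmetrically over `n ∈ ℤ`, the Mittag-Leffler expansion of the cotangent turns this into
`(cot (a / 2) + cot (b / 2)) / 2`, which equals the right-hand side by the double-angle formulas.
-/

open Complex EisensteinSeries
open scoped Real

lemma Complex.summable_inv_sub_mul_add (x y : ℂ) :
    Summable fun n : ℤ ↦ ((x - n) * (y + n))⁻¹ := by
  apply summable_inv_of_isBigO_rpow_inv (a := 2) (by norm_num)
  simpa [pow_two, mul_comm, sub_eq_add_neg] using! (linear_inv_isBigO_right 1 y).mul
    (linear_inv_isBigO_right 1 x).comp_neg_int

theorem Complex.hasSum_int_one_div_sub_add_one_div_add {x y : ℂ} (hx : x ∈ integerComplement)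
    (hy : y ∈ integerComplement) :
    HasSum (fun n : ℤ ↦ 1 / (x - n) + 1 / (y + n))
      (π * cot (π * x) + π * cot (π * y)) := by
  set F : ℤ → ℂ := fun n ↦ 1 / (x - n) + 1 / (y + n)
  have hF : Summable F := by
    refine ((summable_inv_sub_mul_add x y).mul_left (x + y)).congr fun n ↦ ?_
    have hxn : x - n ≠ 0 := by
      simpa [sub_eq_add_neg] using integerComplement_add_ne_zero hx (-n)
    have hyn : y + n ≠ 0 := integerComplement_add_ne_zero hy n
    simp only [F]
    field_simp
    ring
  -- pairing `n` with `-n` in the sum over `ℤ` produces the terms of the cotangent series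
  have hpaired := (hasSum_nat_add_iff' 1).mpr hF.hasSum.nat_add_neg
  have hcot := (summable_cotTerm hx).hasSum.add (summable_cotTerm hy).hasSum
  rw [← cot_series_rep' hx, ← cot_series_rep' hy] at hcot
  have hterms : (fun n : ℕ ↦ F ↑(n + 1) + F (-↑(n + 1))) =
      fun n ↦ cotTerm x n + cotTerm y n := by
    funext n
    simp only [F, cotTerm]
    push_cast
    ring
  have hF0 : F 0 = 1 / x + 1 / y := by simp [F]
  simp only [hterms, Finset.range_one, Finset.sum_singleton, Nat.cast_zero, neg_zero,
    hF0] at hpaired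
  have htsum : ∑' n, F n = π * cot (π * x) + π * cot (π * y) := by
    linear_combination hpaired.unique hcot
  exact htsum ▸ hF.hasSum

theorem Real.hasSum_int_one_div_sub_add_one_div_add {x y : ℝ} (hx : ∀ n : ℤ, x ≠ n)
    (hy : ∀ n : ℤ, y ≠ n) :
    HasSum (fun n : ℤ ↦ 1 / (x - n) + 1 / (y + n)) (π * cot (π * x) + π * cot (π * y)) := by
  have hx' : (x : ℂ) ∈ integerComplement := fun ⟨n, hn⟩ ↦ hx n (by exact_mod_cast hn.symm)
  have hy' : (y : ℂ) ∈ integerComplement := fun ⟨n, hn⟩ ↦ hy n (by exact_mod_cast hn.symm)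
  refine Complex.hasSum_ofReal.mp ?_
  push_cast [Complex.ofReal_cot]
  exact Complex.hasSum_int_one_div_sub_add_one_div_add hx' hy'

lemma Real.sub_two_pi_mul_intCast_ne_zero {a : ℝ} (ha : sin a ≠ 0) (n : ℤ) :
    a - 2 * π * n ≠ 0 := by
  have := Real.sin_ne_zero_iff.mp ha (2 * n)
  push_cast at this
  contrapose! this
  linarith

lemma Real.add_two_pi_mul_intCast_ne_zero {a : ℝ} (ha : sin a ≠ 0) (n : ℤ) :
    a + 2 * π * n ≠ 0 := by
  simpa [sub_eq_add_neg] using sub_two_pi_mul_intCast_ne_zero ha (-n)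

lemma Real.cot_half_add_cot_half {a b : ℝ} (ha : sin a ≠ 0) (hb : sin b ≠ 0) :
    (cot (a / 2) + cot (b / 2)) / 2 = (sin (a + b) + sin b + sin a) / (2 * sin b * sin a) := by
  obtain ⟨u, rfl⟩ : ∃ u, a = 2 * u := ⟨a / 2, by ring⟩
  obtain ⟨v, rfl⟩ : ∃ v, b = 2 * v := ⟨b / 2, by ring⟩
  rw [sin_two_mul] at ha hb
  have hu : sin u ≠ 0 := fun h ↦ ha (by simp [h])
  have hv : sin v ≠ 0 := fun h ↦ hb (by simp [h])
  have hcu : cos u ≠ 0 := fun h ↦ ha (by simp [h])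
  have hcv : cos v ≠ 0 := fun h ↦ hb (by simp [h])
  rw [← mul_add, sin_two_mul, sin_two_mul, sin_two_mul, sin_add, cos_add,
    mul_div_cancel_left₀ _ two_ne_zero, mul_div_cancel_left₀ _ two_ne_zero,
    cot_eq_cos_div_sin, cot_eq_cos_div_sin]
  field_simp
  linear_combination (cos u * sin u) * sin_sq_add_cos_sq v + (cos v * sin v) * sin_sq_add_cos_sq u

theorem Real.hasSum_int_add_div_sub_two_pi_mul_mul_add_two_pi_mul {a b : ℝ} (ha : sin a ≠ 0)
    (hb : sin b ≠ 0) :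
    HasSum (fun n : ℤ ↦ (a + b) / ((a - 2 * π * n) * (b + 2 * π * n)))
      ((sin (a + b) + sin b + sin a) / (2 * sin b * sin a)) := by
  have hπ : π ≠ 0 := pi_ne_zero
  have hscaled {c : ℝ} (hc : sin c ≠ 0) (n : ℤ) : c / (2 * π) ≠ n := by
    intro h
    apply sub_two_pi_mul_intCast_ne_zero hc n
    rw [← h]
    field_simp
    ring
  have hhalf (c : ℝ) : π * (c / (2 * π)) = c / 2 := by field_simp
  have hsum := (hasSum_int_one_div_sub_add_one_div_add (hscaled ha) (hscaled hb)).mul_left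
    (1 / (2 * π))
  rw [hhalf, hhalf, ← mul_add, ← mul_assoc, show 1 / (2 * π) * π = 1 / 2 by field_simp,
    one_div_mul_eq_div, cot_half_add_cot_half ha hb] at hsum
  refine hsum.congr_fun fun n ↦ ?_
  have han := sub_two_pi_mul_intCast_ne_zero ha n
  have hbn := add_two_pi_mul_intCast_ne_zero hb n
  field_simp
  ring

/-- **Sum over preimages in the push-forward onto the pizza slice (angular coordinates).**
For `sin(θ - θ₁) ≠ 0` and `sin(θ₂ - θ) ≠ 0`, the family
`n ↦ (θ₂ - θ₁)/((θ₂ - θ - 2πn)(θ + 2πn - θ₁))` over `n ∈ ℤ` has nonzero denominators,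
is summable, and its sum equals
`(sin(θ₂ - θ₁) + sin(θ - θ₁) + sin(θ₂ - θ))/(2 sin(θ - θ₁) sin(θ₂ - θ))`. -/
theorem stmt_11 (θ₁ θ θ₂ : ℝ) (h1 : Real.sin (θ - θ₁) ≠ 0)
    (h2 : Real.sin (θ₂ - θ) ≠ 0) :
    (∀ n : ℤ, θ₂ - θ - 2 * Real.pi * n ≠ 0 ∧ θ + 2 * Real.pi * n - θ₁ ≠ 0) ∧
    Summable (fun n : ℤ =>
      (θ₂ - θ₁) / ((θ₂ - θ - 2 * Real.pi * n) * (θ + 2 * Real.pi * n - θ₁))) ∧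
    ∑' n : ℤ, (θ₂ - θ₁) / ((θ₂ - θ - 2 * Real.pi * n) * (θ + 2 * Real.pi * n - θ₁)) =
      (Real.sin (θ₂ - θ₁) + Real.sin (θ - θ₁) + Real.sin (θ₂ - θ)) /
        (2 * Real.sin (θ - θ₁) * Real.sin (θ₂ - θ)) := by
  have hsum := Real.hasSum_int_add_div_sub_two_pi_mul_mul_add_two_pi_mul h2 h1
  have hterms : ∀ n : ℤ, θ + 2 * Real.pi * n - θ₁ = θ - θ₁ + 2 * Real.pi * n := fun n ↦ by ring
  simp only [sub_add_sub_cancel, ← hterms] at hsum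
  refine ⟨fun n ↦ ⟨Real.sub_two_pi_mul_intCast_ne_zero h2 n, ?_⟩, hsum.summable, hsum.tsum_eq⟩
  rw [hterms]
  exact Real.add_two_pi_mul_intCast_ne_zero h1 n
end

section
/- Let θ be a real number with cos θ ≠ 0. Then the family n ↦ π/((π/2 − θ − 2πn)(π/2 + θ + 2πn)), indexed by n ∈ ℤ, is summable (all denominators are nonzero), and Σ_{n∈ℤ} π/((π/2 − θ − 2πn)(π/2 + θ + 2πn)) = 1/cos θ. -/
/-!
Write `a = π/2 - θ` and `b = π/2 + θ`, so that `a + b = π` and each term splits as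
`1/(a - 2πn) + 1/(b + 2πn)`; the family is absolutely summable by AM-GM against `1/n²`.
Grouping the terms `n` and `-n` turns the sum into two copies of the Mittag-Leffler expansion
`π cot(πx) = 1/x + ∑_{n ≥ 1} (1/(x - n) + 1/(x + n))`, at `x = a/(2π)` and `x = b/(2π)`. Since
`b/2 = π/2 - a/2`, the result is `(cot(a/2) + tan(a/2))/2 = 1/sin a = 1/cos θ`.
-/

open Real

theorem Real.hasSum_cot_pi_mul_sub_inv {x : ℝ} (hx : ∀ n : ℤ, x ≠ n) :
    HasSum (fun n : ℕ => 1 / (x - (n + 1)) + 1 / (x + (n + 1))) (π * cot (π * x) - 1 / x) := by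
  have hz : (x : ℂ) ∈ Complex.integerComplement := by
    rintro ⟨n, hn⟩
    exact hx n (by exact_mod_cast hn.symm)
  have h := (summable_cotTerm hz).hasSum
  rw [← cot_series_rep' hz] at h
  rw [← Complex.hasSum_ofReal]
  push_cast [Complex.ofReal_cot]
  exact h

theorem Real.summable_one_div_sub_mul_add (x y : ℝ) :
    Summable (fun n : ℤ => 1 / ((x - n) * (y + n))) := by
  have hsq (a : ℝ) : Summable (fun n : ℤ => 1 / |n + a| ^ 2) := by
    simpa only [Real.rpow_two] using (summable_one_div_int_add_rpow a 2).mpr one_lt_two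
  refine (((hsq (-x)).add (hsq y)).div_const 2).of_norm_bounded fun n => ?_
  have amgm : |(x - n)⁻¹ * (y + n)⁻¹| ≤ (((x - n)⁻¹) ^ 2 + ((y + n)⁻¹) ^ 2) / 2 := by
    rw [abs_mul]
    nlinarith [sq_abs (x - n)⁻¹, sq_abs (y + n)⁻¹, sq_nonneg (|(x - n)⁻¹| - |(y + n)⁻¹|)]
  convert amgm using 1
  · rw [Real.norm_eq_abs, one_div, mul_inv]
  · simp only [sq_abs, inv_pow, one_div]
    ring

theorem Real.hasSum_one_div_sub_add_one_div_add {x y : ℝ} (hx : ∀ n : ℤ, x ≠ n)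
    (hy : ∀ n : ℤ, y ≠ n) :
    HasSum (fun n : ℤ => 1 / (x - n) + 1 / (y + n)) (π * cot (π * x) + π * cot (π * y)) := by
  set s : ℤ → ℝ := fun n => 1 / (x - n) + 1 / (y + n)
  have hs : Summable s := by
    refine ((summable_one_div_sub_mul_add x y).mul_left (x + y)).congr fun n => ?_
    have hxn : x - n ≠ 0 := sub_ne_zero.mpr (hx n)
    have hyn : y + n ≠ 0 := fun h => hy (-n) (by push_cast; linarith)
    simp only [s]
    field_simp
    ring
  have hpairs : HasSum (fun n : ℕ => s (n + 1 : ℕ) + s (-(n + 1 : ℕ))) (∑' n, s n - s 0) := by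
    have h := (hasSum_nat_add_iff' 1).mpr hs.hasSum.nat_add_neg
    rwa [Finset.sum_range_one, Nat.cast_zero, neg_zero, add_sub_add_right_eq_sub] at h
  have hcot : HasSum (fun n : ℕ => s (n + 1 : ℕ) + s (-(n + 1 : ℕ)))
      (π * cot (π * x) - 1 / x + (π * cot (π * y) - 1 / y)) := by
    convert (hasSum_cot_pi_mul_sub_inv hx).add (hasSum_cot_pi_mul_sub_inv hy) using 2 with n
    simp only [s]
    push_cast
    ring
  have hs0 : s 0 = 1 / x + 1 / y := by simp [s]
  convert hs.hasSum using 1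
  linarith [hpairs.unique hcot]

theorem Real.cot_add_cot_pi_div_two_sub (u : ℝ) : cot u + cot (π / 2 - u) = 2 / sin (2 * u) := by
  rw [cot_eq_cos_div_sin, cot_eq_cos_div_sin, cos_pi_div_two_sub, sin_pi_div_two_sub, sin_two_mul]
  rcases eq_or_ne (sin u) 0 with hs | hs
  · simp [hs]
  rcases eq_or_ne (cos u) 0 with hc | hc
  · simp [hc]
  field_simp
  nlinarith [sin_sq_add_cos_sq u]

theorem Real.hasSum_pi_div_sub_mul_add {a b : ℝ} (hab : a + b = π)
    (ha : ∀ n : ℤ, a - 2 * π * n ≠ 0) (hb : ∀ n : ℤ, b + 2 * π * n ≠ 0) :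
    HasSum (fun n : ℤ => π / ((a - 2 * π * n) * (b + 2 * π * n))) (1 / sin a) := by
  have hπ : 2 * π ≠ 0 := by positivity
  obtain ⟨x, rfl⟩ : ∃ x, a = 2 * π * x := ⟨a / (2 * π), by field_simp⟩
  obtain ⟨y, rfl⟩ : ∃ y, b = 2 * π * y := ⟨b / (2 * π), by field_simp⟩
  have hxy : x + y = 1 / 2 := mul_left_cancel₀ hπ (by linear_combination hab)
  have hx (n : ℤ) : x - n ≠ 0 := fun h => ha n (by linear_combination 2 * π * h)
  have hy (n : ℤ) : y + n ≠ 0 := fun h => hb n (by linear_combination 2 * π * h)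
  have hterm (n : ℤ) : (1 / (x - n) + 1 / (y + n)) / (2 * π) =
      π / ((2 * π * x - 2 * π * n) * (2 * π * y + 2 * π * n)) := by
    rw [one_div_add_one_div (hx n) (hy n), show x - n + (y + n) = 1 / 2 by linear_combination hxy]
    field_simp
  have hsum : (π * cot (π * x) + π * cot (π * y)) / (2 * π) = 1 / sin (2 * π * x) := by
    rw [show π * y = π / 2 - π * x by linear_combination π * hxy, ← mul_add,
      cot_add_cot_pi_div_two_sub, ← mul_assoc]
    field_simp
  have H := (hasSum_one_div_sub_add_one_div_add (fun n (h : x = n) => hx n (sub_eq_zero.mpr h))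
    (fun n (h : y = n) => hy (-n) (by rw [h]; push_cast; ring))).div_const (2 * π)
  simpa only [hterm, hsum] using H

theorem Real.pi_div_two_sub_sub_ne_zero_of_cos_ne_zero {θ : ℝ} (h : cos θ ≠ 0) (n : ℤ) :
    π / 2 - θ - 2 * π * n ≠ 0 ∧ π / 2 + θ + 2 * π * n ≠ 0 := by
  rw [cos_ne_zero_iff] at h
  constructor <;> intro h0
  · exact h (-2 * n) (by push_cast; linear_combination -h0)
  · exact h (-2 * n - 1) (by push_cast; linear_combination h0)

/-- **Sum over preimages in the push-forward of the segment form along `θ ↦ sin θ`.**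
For `cos θ ≠ 0`, the family `n ↦ π/((π/2 - θ - 2πn)(π/2 + θ + 2πn))` over `n ∈ ℤ` has
nonzero denominators, is summable, and its sum equals `1/cos θ`. -/
theorem stmt_12 (θ : ℝ) (h : Real.cos θ ≠ 0) :
    (∀ n : ℤ, Real.pi / 2 - θ - 2 * Real.pi * n ≠ 0 ∧
      Real.pi / 2 + θ + 2 * Real.pi * n ≠ 0) ∧
    Summable (fun n : ℤ =>
      Real.pi / ((Real.pi / 2 - θ - 2 * Real.pi * n) * (Real.pi / 2 + θ + 2 * Real.pi * n))) ∧
    ∑' n : ℤ, Real.pi /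
        ((Real.pi / 2 - θ - 2 * Real.pi * n) * (Real.pi / 2 + θ + 2 * Real.pi * n)) =
      1 / Real.cos θ := by
  have hden := pi_div_two_sub_sub_ne_zero_of_cos_ne_zero h
  have H := hasSum_pi_div_sub_mul_add (by ring) (fun n => (hden n).1) (fun n => (hden n).2)
  rw [sin_pi_div_two_sub] at H
  exact ⟨hden, H.summable, H.tsum_eq⟩
end

section
/- Let r ≥ 1 and let a_1 < b_1 < a_2 < b_2 < ⋯ < a_r < b_r be real numbers. Let x_0 be a real number with a_j < x_0 < b_j for some j ∈ {1,…,r}. Then Σ_{i=1}^r (1/(x_0 − a_i) − 1/(x_0 − b_i)) > 0. -/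
/-!
For `i ≠ j` the summand `1/(x₀ - a i) - 1/(x₀ - b i)` is negative, so the sum is regrouped
across the gaps between consecutive intervals: it equals `1/(x₀ - a₁) - 1/(x₀ - b_r)` plus the
terms `1/(x₀ - a_{i+1}) - 1/(x₀ - b_i)`. The first is positive because `a₁ < x₀ < b_r`, and each
gap term is positive because `x₀` lies outside the gap `[b_i, a_{i+1}]` and `t ↦ 1/(x₀ - t)` is
increasing on each side of `x₀`.
-/

lemma one_div_sub_one_div_pos_of_lt_or_lt {p q x : ℝ} (hpq : p < q) (hx : x < p ∨ q < x) :
    0 < 1 / (x - q) - 1 / (x - p) := by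
  rw [sub_pos]
  rcases hx with hx | hx
  · exact one_div_lt_one_div_of_neg_of_lt (by linarith) (by linarith)
  · exact one_div_lt_one_div_of_lt (by linarith) (by linarith)

lemma Fin.sum_sub_eq_add_sum_succ_sub_castSucc {M : Type*} [AddCommGroup M] {n : ℕ}
    (f g : Fin (n + 1) → M) :
    ∑ i, (f i - g i) = (f 0 - g (Fin.last n)) + ∑ i : Fin n, (f i.succ - g i.castSucc) := by
  rw [Finset.sum_sub_distrib, Finset.sum_sub_distrib, Fin.sum_univ_succ f,
    Fin.sum_univ_castSucc g]
  abel

section Interlacing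

variable {n : ℕ} {a b : Fin n → ℝ}

lemma strictMono_left_of_interlacing (hab : ∀ i, a i < b i)
    (hba : ∀ i j : Fin n, i < j → b i < a j) : StrictMono a :=
  fun i j hij => (hab i).trans (hba i j hij)

lemma strictMono_right_of_interlacing (hab : ∀ i, a i < b i)
    (hba : ∀ i j : Fin n, i < j → b i < a j) : StrictMono b :=
  fun i j hij => (hba i j hij).trans (hab j)

end Interlacing

theorem stmt_15_general (r : ℕ) (a b : Fin r → ℝ)
    (hab : ∀ i, a i < b i) (hba : ∀ i j : Fin r, i < j → b i < a j)
    (j : Fin r) (x₀ : ℝ) (hx₁ : a j < x₀) (hx₂ : x₀ < b j) :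
    0 < ∑ i, (1 / (x₀ - a i) - 1 / (x₀ - b i)) := by
  cases r with
  | zero => exact j.elim0
  | succ n =>
    have ha := (strictMono_left_of_interlacing hab hba).monotone
    have hb := (strictMono_right_of_interlacing hab hba).monotone
    rw [Fin.sum_sub_eq_add_sum_succ_sub_castSucc (fun i => 1 / (x₀ - a i))]
    refine add_pos_of_pos_of_nonneg ?_ (Finset.sum_nonneg fun i _ => ?_)
    · have h_first : a 0 < x₀ := (ha (Fin.zero_le j)).trans_lt hx₁
      have h_last : x₀ < b (Fin.last n) := hx₂.trans_le (hb (Fin.le_last j))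
      have : 1 / (x₀ - b (Fin.last n)) < 1 / (x₀ - a 0) :=
        (one_div_neg.2 (by linarith)).trans (one_div_pos.2 (by linarith))
      linarith
    · refine (one_div_sub_one_div_pos_of_lt_or_lt (hba _ _ Fin.castSucc_lt_succ) ?_).le
      rcases le_or_gt i.succ j with hij | hji
      · exact Or.inr ((ha hij).trans_lt hx₁)
      · exact Or.inl (hx₂.trans_le (hb (Fin.le_castSucc_iff.2 hji)))

/-- **Positive convexity of one-dimensional positive geometries.**
For `a₁ < b₁ < a₂ < b₂ < ⋯ < a_r < b_r` and `x₀` in the interior of one of the intervals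
`(a_j, b_j)`, the canonical-form density `∑ i (1/(x₀ - a i) - 1/(x₀ - b i))` is positive. -/
theorem stmt_15 (r : ℕ) (hr : 1 ≤ r) (a b : Fin r → ℝ)
    (hab : ∀ i, a i < b i) (hba : ∀ i j : Fin r, i < j → b i < a j)
    (j : Fin r) (x₀ : ℝ) (hx₁ : a j < x₀) (hx₂ : x₀ < b j) :
    0 < ∑ i, (1 / (x₀ - a i) - 1 / (x₀ - b i)) :=
  stmt_15_general r a b hab hba j x₀ hx₁ hx₂
end

section
/- Let a, b, x, y be complex numbers with x y ≠ 0, and let ρ_+, ρ_− ∈ ℂ be the two roots of ρ^2 − ((1 + a x + b y)/(x y)) ρ + (a b − 1)/(x y) = 0, so that ρ_+ + ρ_− = (1 + a x + b y)/(x y) and ρ_+ ρ_− = (a b − 1)/(x y). Assume ρ_+ ≠ ρ_−, that (ρ_± y − a)(ρ_± x − b) ≠ 0 for both roots, and that (a + y)(b + x) ≠ 0. Then (1/(x y (ρ_+ − ρ_−))) · ( ρ_+^2/((ρ_+ y − a)(ρ_+ x − b)) − ρ_−^2/((ρ_− y − a)(ρ_− x − b)) ) = (a b + a x + b y)/(x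 y (a + y)(b + x)). -/
/-! For a root `ρ` of `x y ρ² - (1 + a x + b y) ρ + (a b - 1)`, the quadratic denominator
`(ρ y - a)(ρ x - b)` collapses to `ρ + 1`. The sum over the two roots is then the divided
difference of `t ↦ t² / (t + 1)`, namely `(ρ₊ρ₋ + ρ₊ + ρ₋) / ((ρ₊ + 1)(ρ₋ + 1))`, and by Vieta
its numerator and denominator are `(a b + a x + b y) / (x y)` and `(a + y)(b + x) / (x y)`. -/

theorem mul_sub_mul_sub_eq_add_one_of_vieta {R : Type*} [CommRing R] {a b x y u v : R}
    (hsum : (u + v) * (x * y) = 1 + a * x + b * y) (hprod : u * v * (x * y) = a * b - 1) :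
    (u * y - a) * (u * x - b) = u + 1 := by
  linear_combination u * hsum - hprod

theorem sq_div_add_one_sub_sq_div_add_one {K : Type*} [Field K] {u v : K}
    (hu : u + 1 ≠ 0) (hv : v + 1 ≠ 0) :
    u ^ 2 / (u + 1) - v ^ 2 / (v + 1) = (u - v) * (u * v + u + v) / ((u + 1) * (v + 1)) := by
  field_simp
  ring

theorem stmt_17_general (a b x y ρp ρm : ℂ) (hxy : x * y ≠ 0)
    (hsum : ρp + ρm = (1 + a * x + b * y) / (x * y))
    (hprod : ρp * ρm = (a * b - 1) / (x * y))
    (hne : ρp ≠ ρm)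
    (hp : (ρp * y - a) * (ρp * x - b) ≠ 0)
    (hm : (ρm * y - a) * (ρm * x - b) ≠ 0) :
    (1 / (x * y * (ρp - ρm))) *
        (ρp ^ 2 / ((ρp * y - a) * (ρp * x - b)) -
          ρm ^ 2 / ((ρm * y - a) * (ρm * x - b))) =
      (a * b + a * x + b * y) / (x * y * (a + y) * (b + x)) := by
  have hsum' := (eq_div_iff hxy).1 hsum
  have hprod' := (eq_div_iff hxy).1 hprod
  have hfp := mul_sub_mul_sub_eq_add_one_of_vieta hsum' hprod'
  have hfm := mul_sub_mul_sub_eq_add_one_of_vieta (u := ρm) (v := ρp)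
    (by rwa [add_comm]) (by rwa [mul_comm ρm])
  rw [hfp] at hp ⊢
  rw [hfm] at hm ⊢
  have hnum : a * b + a * x + b * y = x * y * (ρp * ρm + ρp + ρm) := by
    linear_combination -hsum' - hprod'
  have hden : x * y * (a + y) * (b + x) = x * y * (x * y * ((ρp + 1) * (ρm + 1))) := by
    linear_combination -(x * y) * hsum' - (x * y) * hprod'
  rw [sq_div_add_one_sub_sq_div_add_one hp hm, hnum, hden]
  have hd : ρp - ρm ≠ 0 := sub_ne_zero.mpr hne
  field_simp

/-- **Sum-over-roots identity for the Newton-polytope push-forward of a quadrilateral.**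
If `ρ₊, ρ₋` are the two (distinct) roots of
`ρ² - ((1 + ax + by)/(xy)) ρ + (ab - 1)/(xy) = 0`, with the stated nonvanishing
assumptions, then
`(1/(xy(ρ₊ - ρ₋)))(ρ₊²/((ρ₊y - a)(ρ₊x - b)) - ρ₋²/((ρ₋y - a)(ρ₋x - b)))
  = (ab + ax + by)/(xy(a + y)(b + x))`. -/
theorem stmt_17 (a b x y ρp ρm : ℂ) (hxy : x * y ≠ 0)
    (hsum : ρp + ρm = (1 + a * x + b * y) / (x * y))
    (hprod : ρp * ρm = (a * b - 1) / (x * y))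
    (hne : ρp ≠ ρm)
    (hp : (ρp * y - a) * (ρp * x - b) ≠ 0)
    (hm : (ρm * y - a) * (ρm * x - b) ≠ 0)
    (hab : (a + y) * (b + x) ≠ 0) :
    (1 / (x * y * (ρp - ρm))) *
        (ρp ^ 2 / ((ρp * y - a) * (ρp * x - b)) -
          ρm ^ 2 / ((ρm * y - a) * (ρm * x - b))) =
      (a * b + a * x + b * y) / (x * y * (a + y) * (b + x)) :=
  stmt_17_general a b x y ρp ρm hxy hsum hprod hne hp hm
end

section
/- Let Y_0, Y_1, Y_2 be positive real numbers and let a be a real number with 0 < a < min(Y_0, Y_1). Then the complex-valued function x ↦ ((Y_0 − a − ix)(Y_1 − a − ix)(Y_2 + a + ix)(a + ix))^{−1} is integrable on ℝ, and (1/(2π · 2!)) ∫_{−∞}^{∞} dx / ((Y_0 − a − ix)(Y_1 − a − ix)(Y_2 + a + ix)(a + ix)) = (1/2!) · ( 1/(Y_0 Y_1 Y_2) − 1/((Y_0 + Y_2)(Y_1 + Y_2) Y_2) ). -/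
/-!
Write every factor as `c - i x` with real `c ≠ 0`: the factors `Y₂ + a + i x` and `a + i x` become
`-(Y₂ + a) - i x` and `-a - i x`, and the two signs cancel. The real part of `(c - i x)⁻¹` is the
Poisson kernel `c / (c² + x²)`, of integral `π sign c`, and its imaginary part is odd; hence the
integrable difference `(c - i x)⁻¹ - (d - i x)⁻¹` integrates to `π (sign c - sign d)`. A partial
fraction decomposition with respect to the two negative parameters reduces the integrand to two
such differences and one product `(p - i x)⁻¹ (q - i x)⁻¹` with `p, q > 0`. The latter integrates
to `0`: by the difference formula if `p ≠ q`, and through the antiderivative `-i (p - i x)⁻¹` if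
`p = q`.
-/

open MeasureTheory Complex Real Filter

lemma integral_eq_zero_of_odd {f : ℝ → ℝ} (hf : ∀ x, f (-x) = -f x) : ∫ x, f x = 0 := by
  have h := integral_neg_eq_self f volume
  simp only [hf, integral_neg] at h
  linarith

lemma integrable_inv_add_sq {m : ℝ} (hm : 0 < m) : Integrable fun x : ℝ => (m + x ^ 2)⁻¹ := by
  have hs : 0 < √m := Real.sqrt_pos.2 hm
  refine ((integrable_inv_one_add_sq.comp_div hs.ne').const_mul m⁻¹).congr
    (ae_of_all _ fun x => ?_)
  dsimp only
  rw [div_pow, Real.sq_sqrt hm.le]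
  field_simp

lemma integral_univ_div_sq_add_sq (c : ℝ) : ∫ x : ℝ, c / (c ^ 2 + x ^ 2) = π * Real.sign c := by
  rcases eq_or_ne c 0 with rfl | hc
  · simp
  have h : ∀ x : ℝ, c / (c ^ 2 + x ^ 2) = c⁻¹ * (1 + (x / c) ^ 2)⁻¹ := fun x => by
    field_simp
  simp_rw [h, integral_const_mul, Measure.integral_comp_div (fun y : ℝ => (1 + y ^ 2)⁻¹),
    integral_univ_inv_one_add_sq, smul_eq_mul]
  rcases hc.lt_or_gt with hneg | hpos
  · rw [abs_of_neg hneg, Real.sign_of_neg hneg]; field_simp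
  · rw [abs_of_pos hpos, Real.sign_of_pos hpos]; field_simp

lemma integrable_div_sq_add_sq (c : ℝ) : Integrable fun x : ℝ => c / (c ^ 2 + x ^ 2) := by
  rcases eq_or_ne c 0 with rfl | hc
  · simp
  simpa [div_eq_mul_inv] using (integrable_inv_add_sq (by positivity : 0 < c ^ 2)).const_mul c

lemma sub_I_mul_ne_zero {c : ℝ} (hc : c ≠ 0) (x : ℝ) : (c : ℂ) - I * x ≠ 0 := fun h =>
  hc (by simpa using congrArg re h)

lemma normSq_sub_I_mul (c x : ℝ) : normSq ((c : ℂ) - I * x) = c ^ 2 + x ^ 2 := by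
  rw [show (c : ℂ) - I * x = c + ((-x : ℝ) : ℂ) * I by push_cast; ring, normSq_add_mul_I,
    neg_sq]

lemma re_inv_sub_I_mul (c x : ℝ) : ((c : ℂ) - I * x)⁻¹.re = c / (c ^ 2 + x ^ 2) := by
  simp [inv_re, normSq_sub_I_mul]

lemma im_inv_sub_I_mul (c x : ℝ) : ((c : ℂ) - I * x)⁻¹.im = x / (c ^ 2 + x ^ 2) := by
  simp [inv_im, normSq_sub_I_mul]

lemma abs_mul_add_sq_le_norm_mul (c d x : ℝ) :
    |c * d| + x ^ 2 ≤ ‖((c : ℂ) - I * x) * ((d : ℂ) - I * x)‖ := by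
  rw [norm_mul, norm_def, norm_def, normSq_sub_I_mul, normSq_sub_I_mul,
    ← Real.sqrt_mul (by positivity)]
  refine Real.le_sqrt_of_sq_le ?_
  rw [abs_mul]
  nlinarith [sq_nonneg (|c| - |d|), sq_abs c, sq_abs d, sq_nonneg x]

lemma integrable_inv_sub_I_mul_mul {c d : ℝ} (hc : c ≠ 0) (hd : d ≠ 0) :
    Integrable fun x : ℝ => ((c : ℂ) - I * x)⁻¹ * ((d : ℂ) - I * x)⁻¹ := by
  have hcont : Continuous fun x : ℝ => ((c : ℂ) - I * x)⁻¹ * ((d : ℂ) - I * x)⁻¹ :=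
    (continuous_const.sub (by fun_prop)).inv₀ (sub_I_mul_ne_zero hc) |>.mul <|
      (continuous_const.sub (by fun_prop)).inv₀ (sub_I_mul_ne_zero hd)
  refine (integrable_inv_add_sq (abs_pos.2 (mul_ne_zero hc hd))).mono'
    hcont.aestronglyMeasurable (ae_of_all _ fun x => ?_)
  rw [← mul_inv, norm_inv]
  exact inv_anti₀ (by positivity) (abs_mul_add_sq_le_norm_mul c d x)

lemma inv_sub_I_mul_sub_inv_sub_I_mul {c d : ℝ} (hc : c ≠ 0) (hd : d ≠ 0) (x : ℝ) :
    ((c : ℂ) - I * x)⁻¹ - ((d : ℂ) - I * x)⁻¹ =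
      ((d - c : ℝ) : ℂ) * (((c : ℂ) - I * x)⁻¹ * ((d : ℂ) - I * x)⁻¹) := by
  have := sub_I_mul_ne_zero hc x
  have := sub_I_mul_ne_zero hd x
  field_simp
  push_cast
  ring

lemma integrable_inv_sub_I_mul_sub {c d : ℝ} (hc : c ≠ 0) (hd : d ≠ 0) :
    Integrable fun x : ℝ => ((c : ℂ) - I * x)⁻¹ - ((d : ℂ) - I * x)⁻¹ := by
  simp_rw [inv_sub_I_mul_sub_inv_sub_I_mul hc hd]
  exact (integrable_inv_sub_I_mul_mul hc hd).const_mul _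

lemma integral_inv_sub_I_mul_sub {c d : ℝ} (hc : c ≠ 0) (hd : d ≠ 0) :
    ∫ x : ℝ, (((c : ℂ) - I * x)⁻¹ - ((d : ℂ) - I * x)⁻¹) =
      ((π * (Real.sign c - Real.sign d) : ℝ) : ℂ) := by
  have hint := integrable_inv_sub_I_mul_sub hc hd
  apply Complex.ext
  · rw [← RCLike.re_to_complex, ← integral_re hint]
    simp only [RCLike.re_to_complex, sub_re, re_inv_sub_I_mul, ofReal_re]
    rw [integral_sub (integrable_div_sq_add_sq c) (integrable_div_sq_add_sq d),
      integral_univ_div_sq_add_sq, integral_univ_div_sq_add_sq]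
    ring
  · rw [← RCLike.im_to_complex, ← integral_im hint]
    simp only [RCLike.im_to_complex, sub_im, im_inv_sub_I_mul, ofReal_im]
    refine integral_eq_zero_of_odd fun x => ?_
    simp only [neg_sq, neg_div]
    ring

lemma tendsto_inv_sub_I_mul_cocompact (c : ℝ) :
    Tendsto (fun x : ℝ => ((c : ℂ) - I * x)⁻¹) (cocompact ℝ) (nhds 0) := by
  refine tendsto_inv₀_cobounded.comp (tendsto_norm_atTop_iff_cobounded.1 ?_)
  refine tendsto_atTop_mono (fun x => ?_) tendsto_norm_cocompact_atTop
  simpa using abs_im_le_norm ((c : ℂ) - I * x)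

lemma integral_inv_sub_I_mul_sq {c : ℝ} (hc : c ≠ 0) :
    ∫ x : ℝ, ((c : ℂ) - I * x)⁻¹ * ((c : ℂ) - I * x)⁻¹ = 0 := by
  have hderiv : ∀ x : ℝ, HasDerivAt (fun y : ℝ => -I * ((c : ℂ) - I * y)⁻¹)
      (((c : ℂ) - I * x)⁻¹ * ((c : ℂ) - I * x)⁻¹) x := fun x => by
    refine ((((hasDerivAt_id x).ofReal_comp).const_mul I).const_sub (c : ℂ)
      |>.fun_inv (sub_I_mul_ne_zero hc x) |>.const_mul (-I)).congr_deriv ?_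
    simp only [id, ofReal_one, mul_one, neg_neg]
    generalize (c : ℂ) - I * x = z
    linear_combination (-(z ^ 2)⁻¹) * I_sq
  have hlim := (tendsto_inv_sub_I_mul_cocompact c).const_mul (-I)
  rw [mul_zero] at hlim
  simpa using integral_of_hasDerivAt_of_tendsto hderiv (integrable_inv_sub_I_mul_mul hc hc)
    (hlim.mono_left atBot_le_cocompact) (hlim.mono_left atTop_le_cocompact)

lemma integral_inv_sub_I_mul_mul_of_mul_pos {c d : ℝ} (hcd : 0 < c * d) :
    ∫ x : ℝ, ((c : ℂ) - I * x)⁻¹ * ((d : ℂ) - I * x)⁻¹ = 0 := by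
  have hc : c ≠ 0 := left_ne_zero_of_mul hcd.ne'
  have hd : d ≠ 0 := right_ne_zero_of_mul hcd.ne'
  rcases eq_or_ne c d with rfl | hne
  · exact integral_inv_sub_I_mul_sq hc
  have hsign : Real.sign c = Real.sign d := by
    rcases pos_and_pos_or_neg_and_neg_of_mul_pos hcd with ⟨hc, hd⟩ | ⟨hc, hd⟩
    · rw [Real.sign_of_pos hc, Real.sign_of_pos hd]
    · rw [Real.sign_of_neg hc, Real.sign_of_neg hd]
  have hdc : ((d - c : ℝ) : ℂ) ≠ 0 := ofReal_ne_zero.2 (sub_ne_zero.2 hne.symm)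
  have h := integral_inv_sub_I_mul_sub hc hd
  simp_rw [inv_sub_I_mul_sub_inv_sub_I_mul hc hd, integral_const_mul, hsign, sub_self,
    mul_zero, ofReal_zero] at h
  exact (mul_eq_zero.1 h).resolve_left hdc

lemma inv_mul_mul_mul_sub_eq {K : Type*} [Field K] {p q r s t : K} (hpt : p - t ≠ 0)
    (hqt : q - t ≠ 0) (hrt : r - t ≠ 0) (hst : s - t ≠ 0) (hsr : s - r ≠ 0) (hpr : p - r ≠ 0)
    (hqr : q - r ≠ 0) (hps : p - s ≠ 0) (hqs : q - s ≠ 0) :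
    ((p - t) * (q - t) * (r - t) * (s - t))⁻¹ =
      (s - r)⁻¹ * (((q - s)⁻¹ - (q - r)⁻¹) * ((p - t)⁻¹ * (q - t)⁻¹)
        - ((p - r) * (q - r))⁻¹ * ((p - t)⁻¹ - (r - t)⁻¹)
        + ((p - s) * (q - s))⁻¹ * ((p - t)⁻¹ - (s - t)⁻¹)) := by
  field_simp
  ring

theorem integrable_and_integral_inv_prod_sub_I_mul {p q r s : ℝ} (hp : 0 < p) (hq : 0 < q)
    (hr : r < 0) (hs : s < 0) (hrs : r ≠ s) :
    Integrable (fun x : ℝ =>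
      (((p : ℂ) - I * x) * ((q : ℂ) - I * x) * ((r : ℂ) - I * x) * ((s : ℂ) - I * x))⁻¹) ∧
    ∫ x : ℝ, (((p : ℂ) - I * x) * ((q : ℂ) - I * x) * ((r : ℂ) - I * x) * ((s : ℂ) - I * x))⁻¹ =
      ((2 * π / (s - r) * (((p - s) * (q - s))⁻¹ - ((p - r) * (q - r))⁻¹) : ℝ) : ℂ) := by
  have hsr : (s : ℂ) - r ≠ 0 := by exact_mod_cast sub_ne_zero.2 hrs.symm
  have hpr : (p : ℂ) - r ≠ 0 := by exact_mod_cast (by linarith : 0 < p - r).ne'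
  have hqr : (q : ℂ) - r ≠ 0 := by exact_mod_cast (by linarith : 0 < q - r).ne'
  have hps : (p : ℂ) - s ≠ 0 := by exact_mod_cast (by linarith : 0 < p - s).ne'
  have hqs : (q : ℂ) - s ≠ 0 := by exact_mod_cast (by linarith : 0 < q - s).ne'
  have hdecomp := fun x : ℝ => inv_mul_mul_mul_sub_eq (t := I * x)
    (sub_I_mul_ne_zero hp.ne' x) (sub_I_mul_ne_zero hq.ne' x) (sub_I_mul_ne_zero hr.ne x)
    (sub_I_mul_ne_zero hs.ne x) hsr hpr hqr hps hqs
  have hKpq := integrable_inv_sub_I_mul_mul hp.ne' hq.ne'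
  have hKpr := integrable_inv_sub_I_mul_sub hp.ne' hr.ne
  have hKps := integrable_inv_sub_I_mul_sub hp.ne' hs.ne
  simp only [hdecomp]
  refine ⟨(((hKpq.const_mul _).sub' (hKpr.const_mul _)).fun_add (hKps.const_mul _)).const_mul _,
    ?_⟩
  rw [integral_const_mul, integral_add ((hKpq.const_mul _).sub' (hKpr.const_mul _))
    (hKps.const_mul _), integral_sub (hKpq.const_mul _) (hKpr.const_mul _), integral_const_mul,
    integral_const_mul, integral_const_mul, integral_inv_sub_I_mul_mul_of_mul_pos (mul_pos hp hq),
    integral_inv_sub_I_mul_sub hp.ne' hr.ne, integral_inv_sub_I_mul_sub hp.ne' hs.ne,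
    Real.sign_of_pos hp, Real.sign_of_neg hr, Real.sign_of_neg hs]
  push_cast
  field_simp
  ring

/-- **Kernel contour-integral representation of the quadrilateral canonical function.**
For positive `Y₀, Y₁, Y₂` and `0 < a < min(Y₀, Y₁)`, the function
`x ↦ ((Y₀-a-ix)(Y₁-a-ix)(Y₂+a+ix)(a+ix))⁻¹` is integrable on `ℝ` and
`(1/(2π·2!)) ∫ dx (...)⁻¹ = (1/2!)(1/(Y₀Y₁Y₂) - 1/((Y₀+Y₂)(Y₁+Y₂)Y₂))`. -/
theorem stmt_18 (Y₀ Y₁ Y₂ a : ℝ) (h₀ : 0 < Y₀) (h₁ : 0 < Y₁) (h₂ : 0 < Y₂)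
    (ha : 0 < a) (ha' : a < min Y₀ Y₁) :
    Integrable (fun x : ℝ =>
      (((Y₀ - a : ℝ) - Complex.I * x) * ((Y₁ - a : ℝ) - Complex.I * x) *
          ((Y₂ + a : ℝ) + Complex.I * x) * ((a : ℝ) + Complex.I * x))⁻¹) ∧
    (1 / (2 * (Real.pi : ℂ) * (Nat.factorial 2 : ℂ))) *
        ∫ x : ℝ,
          (((Y₀ - a : ℝ) - Complex.I * x) * ((Y₁ - a : ℝ) - Complex.I * x) *
              ((Y₂ + a : ℝ) + Complex.I * x) * ((a : ℝ) + Complex.I * x))⁻¹ =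
      (1 / (Nat.factorial 2 : ℂ)) *
        (1 / ((Y₀ : ℂ) * (Y₁ : ℂ) * (Y₂ : ℂ)) -
          1 / (((Y₀ : ℂ) + (Y₂ : ℂ)) * ((Y₁ : ℂ) + (Y₂ : ℂ)) * (Y₂ : ℂ))) := by
  have hY₀ : 0 < Y₀ - a := sub_pos.2 (ha'.trans_le (min_le_left _ _))
  have hY₁ : 0 < Y₁ - a := sub_pos.2 (ha'.trans_le (min_le_right _ _))
  have hflip : ∀ x : ℝ,
      (((Y₀ - a : ℝ) - Complex.I * x) * ((Y₁ - a : ℝ) - Complex.I * x) *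
          ((Y₂ + a : ℝ) + Complex.I * x) * ((a : ℝ) + Complex.I * x))⁻¹ =
      (((Y₀ - a : ℝ) - I * x) * ((Y₁ - a : ℝ) - I * x) *
          ((-(Y₂ + a) : ℝ) - I * x) * ((-a : ℝ) - I * x))⁻¹ := fun x => by
    push_cast
    ring
  obtain ⟨hint, hval⟩ := integrable_and_integral_inv_prod_sub_I_mul hY₀ hY₁ (by linarith)
    (by linarith) (by linarith : -(Y₂ + a) ≠ -a)
  simp only [hflip]
  refine ⟨hint, ?_⟩
  rw [hval, show -a - -(Y₂ + a) = Y₂ by ring, show Y₀ - a - -a = Y₀ by ring,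
    show Y₁ - a - -a = Y₁ by ring, show Y₀ - a - -(Y₂ + a) = Y₀ + Y₂ by ring,
    show Y₁ - a - -(Y₂ + a) = Y₁ + Y₂ by ring]
  have : (Y₀ : ℂ) + Y₂ ≠ 0 := by exact_mod_cast (by positivity : Y₀ + Y₂ ≠ 0)
  have : (Y₁ : ℂ) + Y₂ ≠ 0 := by exact_mod_cast (by positivity : Y₁ + Y₂ ≠ 0)
  have : (Y₀ : ℂ) ≠ 0 := by exact_mod_cast h₀.ne'
  have : (Y₁ : ℂ) ≠ 0 := by exact_mod_cast h₁.ne'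
  have : (Y₂ : ℂ) ≠ 0 := by exact_mod_cast h₂.ne'
  have : (π : ℂ) ≠ 0 := by exact_mod_cast Real.pi_ne_zero
  push_cast
  field_simp
end

section
/- Let a be a real number and define, for real parameters t and u, x(t,u) = u(t^2 − a^2) and y(t,u) = u t (t^2 − a^2). Then y^2 − x^2 (x + a^2) = u^2 (t^2 − a^2)^3 (1 − u), the Jacobian determinant ∂x/∂t · ∂y/∂u − ∂x/∂u · ∂y/∂t equals −u(t^2 − a^2)^2, and consequently, whenever t^2 ≠ a^2, u ≠ 0 and u ≠ 1, (∂x/∂t · ∂y/∂u − ∂x/∂u · ∂y/∂t) / (y^2 − x^2(x + a^2)) = −1/((t^2 − a^2) u (1 − u)) = 1/((a − t)(a + t) u (1 − u)). -/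
theorem nodalCubic_comp_teardropParam {R : Type*} [CommRing R] (a t u : R) :
    (u * t * (t ^ 2 - a ^ 2)) ^ 2 - (u * (t ^ 2 - a ^ 2)) ^ 2 * (u * (t ^ 2 - a ^ 2) + a ^ 2) =
      u ^ 2 * (t ^ 2 - a ^ 2) ^ 3 * (1 - u) := by
  ring

section Derivatives

variable {𝕜 : Type*} [NontriviallyNormedField 𝕜]

theorem deriv_const_mul_sq_sub (c b t : 𝕜) :
    deriv (fun s => c * (s ^ 2 - b)) t = c * (2 * t) := by
  simp

theorem deriv_const_mul_mul_sq_sub (c b t : 𝕜) :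
    deriv (fun s => c * s * (s ^ 2 - b)) t = c * (3 * t ^ 2 - b) := by
  refine (((hasDerivAt_id' t).const_mul c).mul ((hasDerivAt_pow 2 t).sub_const b)).deriv.trans ?_
  push_cast
  ring

theorem jacobian_teardropParam (a t u : 𝕜) :
    deriv (fun s => u * (s ^ 2 - a ^ 2)) t * deriv (fun v => v * t * (t ^ 2 - a ^ 2)) u -
        deriv (fun v => v * (t ^ 2 - a ^ 2)) u * deriv (fun s => u * s * (s ^ 2 - a ^ 2)) t =
      -(u * (t ^ 2 - a ^ 2) ^ 2) := by
  simp only [deriv_const_mul_sq_sub, deriv_mul_const_field, deriv_id'',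
    deriv_const_mul_mul_sq_sub]
  ring

end Derivatives

/-- **The teardrop of the nodal cubic as a non-normal positive geometry.**
With `x(t,u) = u(t² - a²)` and `y(t,u) = u t (t² - a²)`:
(1) `y² - x²(x + a²) = u²(t² - a²)³(1 - u)`;
(2) the Jacobian `∂x/∂t ∂y/∂u - ∂x/∂u ∂y/∂t = -u(t² - a²)²`;
(3) whenever `t² ≠ a²`, `u ≠ 0`, `u ≠ 1`, the ratio (Jacobian)/(y² - x²(x + a²)) equals
`-1/((t² - a²)u(1 - u)) = 1/((a - t)(a + t)u(1 - u))`. -/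
theorem stmt_19 (a : ℝ) :
    (∀ t u : ℝ,
      (u * t * (t ^ 2 - a ^ 2)) ^ 2 -
          (u * (t ^ 2 - a ^ 2)) ^ 2 * (u * (t ^ 2 - a ^ 2) + a ^ 2) =
        u ^ 2 * (t ^ 2 - a ^ 2) ^ 3 * (1 - u)) ∧
    (∀ t u : ℝ,
      deriv (fun s : ℝ => u * (s ^ 2 - a ^ 2)) t *
          deriv (fun v : ℝ => v * t * (t ^ 2 - a ^ 2)) u -
        deriv (fun v : ℝ => v * (t ^ 2 - a ^ 2)) u *
          deriv (fun s : ℝ => u * s * (s ^ 2 - a ^ 2)) t =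
      -(u * (t ^ 2 - a ^ 2) ^ 2)) ∧
    (∀ t u : ℝ, t ^ 2 ≠ a ^ 2 → u ≠ 0 → u ≠ 1 →
      (deriv (fun s : ℝ => u * (s ^ 2 - a ^ 2)) t *
            deriv (fun v : ℝ => v * t * (t ^ 2 - a ^ 2)) u -
          deriv (fun v : ℝ => v * (t ^ 2 - a ^ 2)) u *
            deriv (fun s : ℝ => u * s * (s ^ 2 - a ^ 2)) t) /
          ((u * t * (t ^ 2 - a ^ 2)) ^ 2 -
            (u * (t ^ 2 - a ^ 2)) ^ 2 * (u * (t ^ 2 - a ^ 2) + a ^ 2)) =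
        -(1 / ((t ^ 2 - a ^ 2) * u * (1 - u))) ∧
      (deriv (fun s : ℝ => u * (s ^ 2 - a ^ 2)) t *
            deriv (fun v : ℝ => v * t * (t ^ 2 - a ^ 2)) u -
          deriv (fun v : ℝ => v * (t ^ 2 - a ^ 2)) u *
            deriv (fun s : ℝ => u * s * (s ^ 2 - a ^ 2)) t) /
          ((u * t * (t ^ 2 - a ^ 2)) ^ 2 -
            (u * (t ^ 2 - a ^ 2)) ^ 2 * (u * (t ^ 2 - a ^ 2) + a ^ 2)) =
        1 / ((a - t) * (a + t) * u * (1 - u))) := by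
  refine ⟨nodalCubic_comp_teardropParam a, jacobian_teardropParam a, fun t u ht hu _ => ?_⟩
  rw [jacobian_teardropParam, nodalCubic_comp_teardropParam]
  have hk : t ^ 2 - a ^ 2 ≠ 0 := sub_ne_zero.mpr ht
  have hratio : -(u * (t ^ 2 - a ^ 2) ^ 2) / (u ^ 2 * (t ^ 2 - a ^ 2) ^ 3 * (1 - u)) =
      -(1 / ((t ^ 2 - a ^ 2) * u * (1 - u))) := by
    field_simp
  refine ⟨hratio, hratio.trans ?_⟩
  rw [show t ^ 2 - a ^ 2 = -((a - t) * (a + t)) by ring, neg_mul, neg_mul, one_div, one_div,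
    inv_neg, neg_neg]
end
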